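/- arXiv:2108.02638 — 3 statements merged into one kernel-verified Lean document; each statement's English description precedes it below -/
import Mathlib

section
/- There exist constants c₁, c₂, c₃ > 0 such that the following holds. For every finite simple graph G on n ≥ 2 vertices and every integer k ≥ 1, G admits a weak (⌈c₁·log₂ n⌉, ⌈c₂·k·(log₂ n)³⌉)-network decomposition with cluster distance k and congestion ⌈c₃·(log₂ n)²·min{k, (log₂ n)²}⌉. -/
open SimpleGraph

/-- `FarApart G k A B` : the `G`-distance between the vertex sets `A` and `B` is
strictly greater than `k`, i.e. every walk between a vertex of `A` and a vertex of `B`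
has length greater than `k`. -/
def FarApart {V : Type} (G : SimpleGraph V) (k : ℕ) (A B : Set V) : Prop :=
  ∀ u ∈ A, ∀ v ∈ B, ∀ p : G.Walk u v, k < p.length

/-- A cluster collection with Steiner radius `β` and congestion `κ` in `G`:
pairwise disjoint clusters, each contained in an associated connected Steiner subgraph
in which any two vertices are joined by a path of length at most `β`, and every edge of
`G` lies in at most `κ` of the Steiner subgraphs. -/
structure ClusterCollection {V : Type} (G : SimpleGraph V) (β κ : ℕ) where
  p : ℕ
  cluster : Fin p → Set V
  tree : Fin p → G.Subgraph
  disjoint : ∀ i j, i ≠ j → Disjoint (cluster i) (cluster j)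
  subset_tree : ∀ i, cluster i ⊆ (tree i).verts
  connected : ∀ i, ((tree i).coe).Preconnected
  radius : ∀ i, ∀ u v : (tree i).verts, ∃ w : ((tree i).coe).Walk u v, w.length ≤ β
  congestion : ∀ e ∈ G.edgeSet, {i : Fin p | e ∈ (tree i).edgeSet}.ncard ≤ κ

/-- A weak `(C, β)`-network decomposition with cluster distance `k` and congestion `κ`:
a partition of the vertices into `C` cluster collections (color classes), each with
Steiner radius `β` and congestion `κ`, such that any two distinct clusters of the same
color class are at `G`-distance strictly greater than `k`. -/
structure NetworkDecomposition {V : Type} (G : SimpleGraph V) (C β κ k : ℕ) where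
  coll : Fin C → ClusterCollection G β κ
  cover : ∀ v : V, ∃! ci : (c : Fin C) × Fin (coll c).p, v ∈ (coll ci.1).cluster ci.2
  sep : ∀ c : Fin C, ∀ i j : Fin (coll c).p, i ≠ j →
    FarApart G k ((coll c).cluster i) ((coll c).cluster j)

/-!
Ball carving with respect to walks of length at most `2k`. Inside the uncoloured set `W`, grow
from a vertex `v` the sets `S₀ = {v}` and `S_{j+1}` = the vertices of `W` within distance `2k`
of `S_j`. As `|S_j| ≤ n` cannot double more than `log₂ n` times, some `J ≤ log₂ n` has
`|S_{J+1}| ≤ 2 |S_J|`. Then `S_J` is a cluster, `S_{J+1} \ S_J` is deferred to the next colour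
and the rest of `W` is carved further. So the clusters of one colour are more than `2k` apart,
and each colour defers at most half of what it receives: `⌊log₂ n⌋ + 1` colours suffice.
The Steiner subgraph of a cluster is the union of the walks of length at most `2k` between its
vertices. It has radius at most `2k (log₂ n + 1)` around `v`, and all its vertices are within
distance `k` of the cluster, so the Steiner subgraphs of one colour are vertex-disjoint.
-/

lemma Nat.exists_le_log_two_succ_le_two_mul {n : ℕ} (f : ℕ → ℕ) (h0 : 1 ≤ f 0)
    (hn : ∀ j, f j ≤ n) : ∃ j ≤ Nat.log 2 n, f (j + 1) ≤ 2 * f j := by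
  by_contra! hf
  have hpow : ∀ j ≤ Nat.log 2 n + 1, 2 ^ j ≤ f j := by
    intro j hj
    induction j with
    | zero => simpa using h0
    | succ j ih =>
      have := hf j (by omega)
      rw [pow_succ]
      linarith [ih (by omega)]
  have := (hpow _ le_rfl).trans (hn _)
  exact absurd (Nat.lt_pow_succ_log_self one_lt_two n) (by omega)

lemma Nat.exists_lt_and_not_succ {p : ℕ → Prop} {C : ℕ} (h0 : p 0) (hC : ¬p C) :
    ∃ c < C, p c ∧ ¬p (c + 1) := by
  induction C with
  | zero => exact absurd h0 hC
  | succ C ih =>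
    by_cases hpC : p C
    · exact ⟨C, C.lt_succ_self, hpC, hC⟩
    · obtain ⟨c, hc, h⟩ := ih hpC
      exact ⟨c, hc.trans C.lt_succ_self, h⟩

section

variable {V : Type} {G : SimpleGraph V}

namespace FarApart

variable {k : ℕ} {A B : Set V}

lemma symm (h : FarApart G k A B) : FarApart G k B A :=
  fun u hu v hv p => by simpa using h v hv u hu p.reverse

lemma mono {k' : ℕ} (hk : k' ≤ k) (h : FarApart G k A B) : FarApart G k' A B :=
  fun u hu v hv p => hk.trans_lt (h u hu v hv p)

lemma disjoint (h : FarApart G k A B) : Disjoint A B :=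
  Set.disjoint_left.mpr fun a ha hb => by simpa using h a ha a hb .nil

end FarApart

namespace SimpleGraph

lemma Walk.exists_coe_walk_of_toSubgraph_le {H : G.Subgraph} {u v : V} (p : G.Walk u v)
    (h : p.toSubgraph ≤ H) (hu : u ∈ H.verts) (hv : v ∈ H.verts) :
    ∃ q : H.coe.Walk ⟨u, hu⟩ ⟨v, hv⟩, q.length = p.length := by
  induction p with
  | nil => exact ⟨.nil, rfl⟩
  | @cons a b c hab p ih =>
    rw [Walk.toSubgraph, sup_le_iff] at h
    have hadj : H.Adj a b := h.1.2 (by simp)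
    obtain ⟨q, hq⟩ := ih h.2 (H.edge_vert hadj.symm) hv
    exact ⟨.cons (show H.coe.Adj ⟨a, hu⟩ ⟨b, _⟩ from hadj) q, by simp [hq]⟩

lemma Walk.exists_half_walk_of_mem_support {u v x : V} (p : G.Walk u v)
    (hx : x ∈ p.support) :
    (∃ q : G.Walk x u, 2 * q.length ≤ p.length) ∨ ∃ q : G.Walk x v, 2 * q.length ≤ p.length := by
  classical
  have hsplit := congrArg Walk.length (p.take_spec hx)
  rw [Walk.length_append] at hsplit
  rcases le_total (p.takeUntil x hx).length (p.dropUntil x hx).length with h | h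
  · exact .inl ⟨(p.takeUntil x hx).reverse, by rw [Walk.length_reverse]; omega⟩
  · exact .inr ⟨p.dropUntil x hx, by omega⟩

def steinerSubgraph (G : SimpleGraph V) (r : ℕ) (A : Set V) : G.Subgraph :=
  ⨆ (a : A) (b : A) (p : G.Walk a b) (_ : p.length ≤ r), p.toSubgraph

variable {r : ℕ} {A : Set V}

lemma toSubgraph_le_steinerSubgraph {a b : V} (ha : a ∈ A) (hb : b ∈ A) (p : G.Walk a b)
    (hp : p.length ≤ r) : p.toSubgraph ≤ G.steinerSubgraph r A :=
  le_iSup_of_le (⟨a, ha⟩ : A) <| le_iSup_of_le (⟨b, hb⟩ : A) <| le_iSup_of_le p <|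
    le_iSup_of_le hp le_rfl

lemma mem_steinerSubgraph_verts {x : V} :
    x ∈ (G.steinerSubgraph r A).verts ↔
      ∃ a ∈ A, ∃ b ∈ A, ∃ p : G.Walk a b, p.length ≤ r ∧ x ∈ p.support := by
  simp [steinerSubgraph, Subgraph.verts_iSup]

lemma subset_steinerSubgraph_verts : A ⊆ (G.steinerSubgraph r A).verts := fun a ha =>
  mem_steinerSubgraph_verts.mpr ⟨a, ha, a, ha, .nil, by simp, by simp⟩

lemma exists_walk_of_mem_steinerSubgraph_verts {x : V} (hx : x ∈ (G.steinerSubgraph r A).verts) :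
    ∃ b ∈ A, ∃ p : G.Walk x b, p.toSubgraph ≤ G.steinerSubgraph r A ∧ p.length ≤ r := by
  classical
  obtain ⟨a, ha, b, hb, p, hp, hxp⟩ := mem_steinerSubgraph_verts.mp hx
  have hdrop : (p.dropUntil x hxp).toSubgraph ≤ p.toSubgraph := by
    conv_rhs => rw [← p.take_spec hxp, Walk.toSubgraph_append]
    exact le_sup_right
  exact ⟨b, hb, p.dropUntil x hxp, hdrop.trans (toSubgraph_le_steinerSubgraph ha hb p hp),
    (p.length_dropUntil_le_length hxp).trans hp⟩

lemma exists_half_walk_of_mem_steinerSubgraph_verts {x : V}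
    (hx : x ∈ (G.steinerSubgraph r A).verts) : ∃ a ∈ A, ∃ p : G.Walk x a, 2 * p.length ≤ r := by
  obtain ⟨a, ha, b, hb, p, hp, hxp⟩ := mem_steinerSubgraph_verts.mp hx
  rcases p.exists_half_walk_of_mem_support hxp with ⟨q, hq⟩ | ⟨q, hq⟩
  · exact ⟨a, ha, q, by omega⟩
  · exact ⟨b, hb, q, by omega⟩

lemma _root_.FarApart.disjoint_steinerSubgraph_verts {B : Set V} (h : FarApart G r A B) :
    Disjoint (G.steinerSubgraph r A).verts (G.steinerSubgraph r B).verts := by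
  refine Set.disjoint_left.mpr fun x hxA hxB => ?_
  obtain ⟨a, ha, p, hp⟩ := exists_half_walk_of_mem_steinerSubgraph_verts hxA
  obtain ⟨b, hb, q, hq⟩ := exists_half_walk_of_mem_steinerSubgraph_verts hxB
  have := h a ha b hb (p.reverse.append q)
  rw [Walk.length_append, Walk.length_reverse] at this
  omega

def Subgraph.RadiusLE (H : G.Subgraph) (R : ℕ) : Prop :=
  ∃ c, ∀ x ∈ H.verts, ∃ p : G.Walk x c, p.toSubgraph ≤ H ∧ p.length ≤ R

lemma Subgraph.RadiusLE.exists_walk {H : G.Subgraph} {R : ℕ} (hH : H.RadiusLE R)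
    (u v : H.verts) : ∃ q : H.coe.Walk u v, q.length ≤ 2 * R := by
  obtain ⟨c, hc⟩ := hH
  obtain ⟨p, hpH, hp⟩ := hc u u.2
  obtain ⟨p', hpH', hp'⟩ := hc v v.2
  obtain ⟨q, hq⟩ := (p.append p'.reverse).exists_coe_walk_of_toSubgraph_le
    (by simpa [Walk.toSubgraph_append] using ⟨hpH, hpH'⟩) u.2 v.2
  exact ⟨q, by rw [hq, Walk.length_append, Walk.length_reverse]; omega⟩

lemma Subgraph.RadiusLE.preconnected {H : G.Subgraph} {R : ℕ} (hH : H.RadiusLE R) :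
    H.coe.Preconnected := fun u v => (hH.exists_walk u v).elim fun q _ => ⟨q⟩

def thickenWithin (G : SimpleGraph V) (r : ℕ) (W S : Set V) : Set V :=
  {w | w ∈ W ∧ ∃ a ∈ S, ∃ p : G.Walk w a, p.length ≤ r}

variable {W : Set V} {v : V}

lemma thickenWithin_subset (S : Set V) : G.thickenWithin r W S ⊆ W := fun _ hw => hw.1

lemma subset_thickenWithin {S : Set V} (hS : S ⊆ W) : S ⊆ G.thickenWithin r W S :=
  fun a ha => ⟨hS ha, a, ha, .nil, by simp⟩

lemma iterate_thickenWithin_subset (hv : v ∈ W) (j : ℕ) :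
    (G.thickenWithin r W)^[j] {v} ⊆ W := by
  cases j with
  | zero => simpa using hv
  | succ j => rw [Function.iterate_succ_apply']; exact thickenWithin_subset _

lemma monotone_iterate_thickenWithin (hv : v ∈ W) :
    Monotone fun j => (G.thickenWithin r W)^[j] {v} :=
  monotone_nat_of_le_succ fun j => by
    rw [Function.iterate_succ_apply']
    exact subset_thickenWithin (iterate_thickenWithin_subset hv j)

lemma exists_walk_of_mem_iterate_thickenWithin (hv : v ∈ W) {j : ℕ}
    (hA : (G.thickenWithin r W)^[j] {v} ⊆ A) {a : V} (ha : a ∈ (G.thickenWithin r W)^[j] {v}) :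
    ∃ p : G.Walk a v, p.toSubgraph ≤ G.steinerSubgraph r A ∧ p.length ≤ r * j := by
  induction j generalizing a with
  | zero =>
    have hvA : v ∈ A := hA rfl
    obtain rfl : a = v := ha
    exact ⟨.nil, toSubgraph_le_steinerSubgraph hvA hvA .nil (Nat.zero_le r), by simp⟩
  | succ j ih =>
    have hjA := (monotone_iterate_thickenWithin hv j.le_succ).trans hA
    have haA := hA ha
    rw [Function.iterate_succ_apply'] at ha
    obtain ⟨-, b, hb, p, hp⟩ := ha
    obtain ⟨q, hqA, hq⟩ := ih hjA hb
    refine ⟨p.append q, ?_, ?_⟩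
    · rw [Walk.toSubgraph_append]
      exact sup_le (toSubgraph_le_steinerSubgraph haA (hjA hb) p hp) hqA
    · rw [Walk.length_append, Nat.mul_succ]
      omega

lemma exists_cluster_of_mem [Finite V] (r : ℕ) (hv : v ∈ W) :
    ∃ A, v ∈ A ∧ A ⊆ W ∧ (G.thickenWithin r W A).ncard ≤ 2 * A.ncard ∧
      (G.steinerSubgraph r A).RadiusLE (r * (Nat.log 2 (Nat.card V) + 1)) := by
  set S := fun j => (G.thickenWithin r W)^[j] {v}
  obtain ⟨J, hJ, hgrowth⟩ := Nat.exists_le_log_two_succ_le_two_mul (fun j => (S j).ncard)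
    (by simp [S]) (fun j => Set.ncard_le_card _)
  refine ⟨S J, monotone_iterate_thickenWithin hv (Nat.zero_le J) rfl,
    iterate_thickenWithin_subset hv J, ?_, v, fun x hx => ?_⟩
  · simpa only [S, Function.iterate_succ_apply'] using hgrowth
  obtain ⟨b, hb, p, hpA, hp⟩ := exists_walk_of_mem_steinerSubgraph_verts hx
  obtain ⟨q, hqA, hq⟩ := exists_walk_of_mem_iterate_thickenWithin hv subset_rfl hb
  refine ⟨p.append q, by simpa [Walk.toSubgraph_append] using ⟨hpA, hqA⟩, ?_⟩
  rw [Walk.length_append]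
  have : r * J ≤ r * Nat.log 2 (Nat.card V) := Nat.mul_le_mul_left r hJ
  linarith

/-- One colour class: the clusters `𝒞` carved out of `W`, and the leftover `W'` that the next
colour has to carve. -/
structure IsCarving (G : SimpleGraph V) (r R : ℕ) (W : Set V) (𝒞 : Set (Set V)) (W' : Set V) :
    Prop where
  subset_diff : ∀ A ∈ 𝒞, A ⊆ W \ W'
  radiusLE : ∀ A ∈ 𝒞, (G.steinerSubgraph r A).RadiusLE R
  pairwise_farApart : 𝒞.Pairwise (FarApart G r)
  leftover_subset : W' ⊆ W
  two_mul_ncard_leftover_le : 2 * W'.ncard ≤ W.ncard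
  diff_subset_sUnion : W \ W' ⊆ ⋃₀ 𝒞

lemma exists_isCarving [Finite V] (G : SimpleGraph V) (r : ℕ) (W : Set V) :
    ∃ 𝒞 W', G.IsCarving r (r * (Nat.log 2 (Nat.card V) + 1)) W 𝒞 W' := by
  rcases W.eq_empty_or_nonempty with rfl | ⟨v, hv⟩
  · exact ⟨∅, ∅, ⟨by simp, by simp, by simp, by simp, by simp, by simp⟩⟩
  obtain ⟨A, hvA, hAW, hcard, hA⟩ := G.exists_cluster_of_mem r hv
  set F := G.thickenWithin r W A
  have hAF : A ⊆ F := subset_thickenWithin hAW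
  have hFW : F ⊆ W := thickenWithin_subset A
  have hdecr : (W \ F).ncard < W.ncard :=
    Set.ncard_lt_ncard (Set.sdiff_ssubset_left_iff.mpr ⟨v, hv, hAF hvA⟩)
  obtain ⟨𝒞, W', h⟩ := exists_isCarving G r (W \ F)
  have hfar : ∀ B ∈ 𝒞, FarApart G r A B := fun B hB a ha b hb p => by
    by_contra! hp
    obtain ⟨⟨hbW, hbF⟩, -⟩ := h.subset_diff B hB hb
    exact hbF ⟨hbW, a, ha, p.reverse, by simpa using hp⟩
  refine ⟨insert A 𝒞, W' ∪ (F \ A), ⟨?_, ?_, ?_, ?_, ?_, ?_⟩⟩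
  · refine Set.forall_mem_insert.mpr ⟨fun a ha => ⟨hAW ha, ?_⟩, fun B hB b hb => ?_⟩
    · rintro (ha' | ha')
      exacts [(h.leftover_subset ha').2 (hAF ha), ha'.2 ha]
    · obtain ⟨⟨hbW, hbF⟩, hbW'⟩ := h.subset_diff B hB hb
      exact ⟨hbW, by rintro (hb' | hb'); exacts [hbW' hb', hbF hb'.1]⟩
  · exact Set.forall_mem_insert.mpr ⟨hA, h.radiusLE⟩
  · exact h.pairwise_farApart.insert fun B hB _ => ⟨hfar B hB, (hfar B hB).symm⟩
  · exact Set.union_subset (h.leftover_subset.trans Set.sdiff_subset) (Set.sdiff_subset.trans hFW)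
  · have := h.two_mul_ncard_leftover_le
    have := Set.ncard_union_le W' (F \ A)
    have := Set.ncard_sdiff_add_ncard_of_subset hFW
    have := Set.ncard_sdiff_add_ncard_of_subset hAF
    omega
  · rintro w ⟨hwW, hw⟩
    by_cases hwF : w ∈ F
    · exact ⟨A, Set.mem_insert A 𝒞, by by_contra hwA; exact hw (.inr ⟨hwF, hwA⟩)⟩
    · exact Set.sUnion_mono (Set.subset_insert A 𝒞)
        (h.diff_subset_sUnion ⟨⟨hwW, hwF⟩, fun hw' => hw (.inl hw')⟩)
termination_by W.ncard

end SimpleGraph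

namespace ClusterCollection

variable {β κ : ℕ}

def mono {β' κ' : ℕ} (hβ : β ≤ β') (hκ : κ ≤ κ') (𝒦 : ClusterCollection G β κ) :
    ClusterCollection G β' κ' where
  __ := 𝒦
  radius i u v := (𝒦.radius i u v).imp fun _ hw => hw.trans hβ
  congestion e he := (𝒦.congestion e he).trans hκ

variable [Finite V] {r R : ℕ} {𝒞 : Set (Set V)}

lemma pairwise_farApart_equivFin_symm (h𝒞 : 𝒞.Pairwise (FarApart G r)) :
    Pairwise fun i j => FarApart G r ((Finite.equivFin 𝒞).symm i) ((Finite.equivFin 𝒞).symm j) :=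
  fun i j hij => h𝒞 ((Finite.equivFin 𝒞).symm i).2 ((Finite.equivFin 𝒞).symm j).2
    ((Subtype.val_injective.comp (Finite.equivFin 𝒞).symm.injective).ne hij)

/-- Clusters more than `r` apart have disjoint Steiner subgraphs, hence congestion `1`. -/
noncomputable def ofFarApart (h𝒞 : 𝒞.Pairwise (FarApart G r))
    (hR : ∀ A ∈ 𝒞, (G.steinerSubgraph r A).RadiusLE R) : ClusterCollection G (2 * R) 1 where
  p := Nat.card 𝒞
  cluster i := (Finite.equivFin 𝒞).symm i
  tree i := G.steinerSubgraph r ((Finite.equivFin 𝒞).symm i)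
  disjoint _ _ hij := (pairwise_farApart_equivFin_symm h𝒞 hij).disjoint
  subset_tree _ := subset_steinerSubgraph_verts
  connected i := (hR _ ((Finite.equivFin 𝒞).symm i).2).preconnected
  radius i := (hR _ ((Finite.equivFin 𝒞).symm i).2).exists_walk
  congestion e _ := by
    refine ((Set.ncard_le_one_iff (Set.toFinite _)).mpr fun {i j} hi hj => ?_)
    by_contra hij
    exact Set.disjoint_left.mp
      (pairwise_farApart_equivFin_symm h𝒞 hij).disjoint_steinerSubgraph_verts
      (Subgraph.mem_verts_of_mem_edge hi e.out_fst_mem)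
      (Subgraph.mem_verts_of_mem_edge hj e.out_fst_mem)

lemma ofFarApart_cluster_mem (h𝒞 : 𝒞.Pairwise (FarApart G r))
    (hR : ∀ A ∈ 𝒞, (G.steinerSubgraph r A).RadiusLE R) (i : Fin (ofFarApart h𝒞 hR).p) :
    (ofFarApart h𝒞 hR).cluster i ∈ 𝒞 :=
  ((Finite.equivFin 𝒞).symm i).2

lemma exists_ofFarApart_cluster_eq (h𝒞 : 𝒞.Pairwise (FarApart G r))
    (hR : ∀ A ∈ 𝒞, (G.steinerSubgraph r A).RadiusLE R) {A : Set V} (hA : A ∈ 𝒞) :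
    ∃ i, (ofFarApart h𝒞 hR).cluster i = A :=
  ⟨Finite.equivFin 𝒞 ⟨A, hA⟩, congrArg Subtype.val ((Finite.equivFin 𝒞).symm_apply_apply _)⟩

end ClusterCollection

namespace NetworkDecomposition

variable {C β κ k : ℕ}

def mono {β' κ' : ℕ} (hβ : β ≤ β') (hκ : κ ≤ κ') (N : NetworkDecomposition G C β κ k) :
    NetworkDecomposition G C β' κ' k where
  coll c := (N.coll c).mono hβ hκ
  cover := N.cover
  sep := N.sep

def ofDisjoint (coll : Fin C → ClusterCollection G β κ)
    (cover : ∀ v, ∃ c i, v ∈ (coll c).cluster i)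
    (disjoint : ∀ c c', c ≠ c' → ∀ i i', Disjoint ((coll c).cluster i) ((coll c').cluster i'))
    (sep : ∀ c, ∀ i j, i ≠ j → FarApart G k ((coll c).cluster i) ((coll c).cluster j)) :
    NetworkDecomposition G C β κ k where
  coll := coll
  cover v := by
    obtain ⟨c, i, hv⟩ := cover v
    refine ⟨⟨c, i⟩, hv, ?_⟩
    rintro ⟨c', i'⟩ hv'
    obtain rfl : c' = c := by_contra fun h => Set.disjoint_left.mp (disjoint c' c h i' i) hv' hv
    obtain rfl : i' = i :=
      by_contra fun h => Set.disjoint_left.mp ((coll c').disjoint i' i h) hv' hv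
    rfl
  sep := sep

end NetworkDecomposition

namespace SimpleGraph

theorem nonempty_networkDecomposition [Finite V] (G : SimpleGraph V) (k C : ℕ)
    (hC : Nat.card V < 2 ^ C) :
    Nonempty (NetworkDecomposition G C (2 * (2 * k * (Nat.log 2 (Nat.card V) + 1))) 1 k) := by
  choose 𝒞 W' h𝒞 using G.exists_isCarving (2 * k)
  set R : ℕ → Set V := fun c => W'^[c] Set.univ
  have hR_succ (c : ℕ) : R (c + 1) = W' (R c) := Function.iterate_succ_apply' W' c Set.univ
  have hanti : Antitone R := antitone_nat_of_succ_le fun c =>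
    (hR_succ c).trans_subset (h𝒞 (R c)).leftover_subset
  have hcard (c : ℕ) : 2 ^ c * (R c).ncard ≤ Nat.card V := by
    induction c with
    | zero => simp [R, Set.ncard_univ]
    | succ c ih =>
      rw [hR_succ, pow_succ, mul_assoc]
      exact (Nat.mul_le_mul_left _ (h𝒞 (R c)).two_mul_ncard_leftover_le).trans ih
  have hRC : R C = ∅ := by
    refine (Set.ncard_eq_zero (Set.toFinite _)).mp (Nat.eq_zero_of_not_pos fun hpos => ?_)
    have := (Nat.le_mul_of_pos_right (2 ^ C) hpos).trans (hcard C)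
    omega
  let coll (c : Fin C) := ClusterCollection.ofFarApart (h𝒞 (R c)).pairwise_farApart
    (h𝒞 (R c)).radiusLE
  have hcoll (c : Fin C) (i) : (coll c).cluster i ⊆ R c \ R (c + 1) := by
    rw [hR_succ]
    exact (h𝒞 (R c)).subset_diff _ (ClusterCollection.ofFarApart_cluster_mem _ _ i)
  refine ⟨.ofDisjoint coll (fun v => ?_) (fun c c' hcc' i i' => ?_) (fun c i j hij => ?_)⟩
  · obtain ⟨c, hc, hv⟩ := Nat.exists_lt_and_not_succ (p := fun c => v ∈ R c) (Set.mem_univ v)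
      (hRC ▸ Set.notMem_empty v)
    obtain ⟨A, hA, hvA⟩ := (h𝒞 (R c)).diff_subset_sUnion (by rwa [← hR_succ])
    obtain ⟨i, hi⟩ := ClusterCollection.exists_ofFarApart_cluster_eq (h𝒞 (R c)).pairwise_farApart
      (h𝒞 (R c)).radiusLE hA
    exact ⟨⟨c, hc⟩, i, hi ▸ hvA⟩
  · wlog hlt : c < c' generalizing c c' i i'
    · exact (this c' c hcc'.symm i' i ((Ne.symm hcc').lt_of_le (not_lt.mp hlt))).symm
    exact Set.disjoint_of_subset (hcoll c i) ((hcoll c' i').trans Set.sdiff_subset)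
      (Set.disjoint_sdiff_left.mono_right (hanti (Nat.succ_le_of_lt hlt)))
  · exact (ClusterCollection.pairwise_farApart_equivFin_symm (h𝒞 (R c)).pairwise_farApart
      hij).mono (by omega)

end SimpleGraph

end

theorem statement0 :
    ∃ c₁ c₂ c₃ : ℝ, 0 < c₁ ∧ 0 < c₂ ∧ 0 < c₃ ∧
      ∀ (V : Type) [Fintype V] (G : SimpleGraph V),
        2 ≤ Fintype.card V →
        ∀ k : ℕ, 1 ≤ k →
          Nonempty (NetworkDecomposition G
            ⌈c₁ * Real.logb 2 (Fintype.card V)⌉₊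
            ⌈c₂ * k * (Real.logb 2 (Fintype.card V)) ^ 3⌉₊
            ⌈c₃ * (Real.logb 2 (Fintype.card V)) ^ 2 *
              min (k : ℝ) ((Real.logb 2 (Fintype.card V)) ^ 2)⌉₊
            k) := by
  refine ⟨2, 8, 1, by norm_num, by norm_num, by norm_num, fun V _ G hn k hk => ?_⟩
  set n := Fintype.card V
  set L := Nat.log 2 n
  set x := Real.logb 2 n
  have hL : (1 : ℝ) ≤ L := by exact_mod_cast Nat.log_pos one_lt_two hn
  have hLx : (L : ℝ) ≤ x := Real.natLog_le_logb n 2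
  have hx : 1 ≤ x := hL.trans hLx
  have hk : (1 : ℝ) ≤ k := by exact_mod_cast hk
  have hC : Nat.card V < 2 ^ ⌈2 * x⌉₊ := by
    rw [Nat.card_eq_fintype_card]
    refine (Nat.lt_pow_succ_log_self one_lt_two n).trans_le (Nat.pow_le_pow_right two_pos ?_)
    exact Nat.cast_le.mp ((show ((L + 1 : ℕ) : ℝ) ≤ 2 * x by push_cast; linarith).trans
      (Nat.le_ceil _))
  obtain ⟨N⟩ := G.nonempty_networkDecomposition k _ hC
  rw [Nat.card_eq_fintype_card] at N
  refine ⟨N.mono (Nat.cast_le.mp (le_trans ?_ (Nat.le_ceil _))) (Nat.one_le_ceil_iff.mpr ?_)⟩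
  · have : (L : ℝ) + 1 ≤ 2 * x ^ 3 := by linarith [le_self_pow₀ hx (by norm_num : 3 ≠ 0)]
    push_cast
    nlinarith
  · have : 0 < min (k : ℝ) (x ^ 2) := lt_min (by linarith) (by positivity)
    have : 0 < x := by linarith
    positivity
end

section
/- There exist constants c₁, c₂ > 0 such that the following holds. For every n ≥ 2, every finite simple graph G on at most n vertices, every subset S of the vertices of G, every integer k ≥ 1, and every real x ≥ 1, there exists a cluster collection C₁,…,C_p in G with every C_i ⊆ S, with Steiner radius ⌈c₁·k·x·(log₂ n)³⌉ and congestion ⌈c₂·(log₂ n)·min{k, x·(log₂ n)²}⌉, such that |C₁ ∪ … ∪ C_p| ≥ (1 − 1/x)·|S| and dist_G(C_i, C_j) > k for all 1 ≤ i ≠ j ≤ p. -/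
open SimpleGraph

/-!
Exponential-shift clustering with truncated geometric shifts. Every vertex `u` gets a shift
`δ u ∈ [0, M + 2k]`, drawn with weight `q ^ δ u`, and every vertex `v` joins the vertex `u` of its
component maximising `δ u - dist u v`. The cells are star-shaped around their centers, so they
are connected, have radius at most `M + 2k` and are vertex-disjoint (congestion `1`). Call `v`
padded when its center beats every competitor by more than `2k`: then all vertices within
distance `k` of `v` share its center, so padded vertices of different cells are more than `k`
apart. If the center `u` of `v` has `δ u < M`, raising `δ u` by `2k + 1` makes `v` padded and
costs a factor `q ^ (2k+1)` in weight; with a tail bound for `δ u ≥ M` this shows that `v` is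
unpadded with probability at most `1/x`, so some shift pads all but `|S|/x` vertices of `S`.
-/

open Finset

namespace SimpleGraph

section Walk

variable {V : Type*} {G : SimpleGraph V}

lemma Walk.exists_walk_induce_top_length_eq {s : Set V} {a b : V} (p : G.Walk a b)
    (hp : ∀ x ∈ p.support, x ∈ s) :
    ∃ q : ((⊤ : G.Subgraph).induce s).coe.Walk
      ⟨a, hp _ p.start_mem_support⟩ ⟨b, hp _ p.end_mem_support⟩, q.length = p.length := by
  induction p with
  | nil => exact ⟨.nil, rfl⟩
  | cons h p ih =>
    obtain ⟨q, hq⟩ := ih fun x hx => hp x (p.support.mem_cons_of_mem _ hx)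
    refine ⟨.cons ⟨hp _ (p.cons h).start_mem_support,
      hp _ (p.support.mem_cons_of_mem _ p.start_mem_support), h⟩ q, ?_⟩
    exact congrArg (· + 1) hq

lemma Walk.dist_add_dist_eq_of_length_eq_dist {a b z : V} (p : G.Walk a b)
    (hp : p.length = G.dist a b) (hz : z ∈ p.support) :
    G.dist a z + G.dist z b = G.dist a b := by
  classical
  have hsplit := congrArg Walk.length (p.take_spec hz)
  rw [Walk.length_append] at hsplit
  have h₁ := dist_le (p.takeUntil z hz)
  have h₂ := dist_le (p.dropUntil z hz)
  have h₃ := (p.takeUntil z hz).reachable.dist_triangle_left b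
  omega

end Walk

section ShiftClustering

variable {V : Type*} [Fintype V] (G : SimpleGraph V) (δ : V → ℕ)

noncomputable def shiftValue (v u : V) : ℤ := δ u - G.dist u v

/-- The lexicographic order on `(shiftValue, index in a fixed enumeration of V)`, encoded in `ℤ`,
so that the maximiser is unique. -/
noncomputable def shiftKey (v u : V) : ℤ :=
  (Fintype.card V + 1) * G.shiftValue δ v u + Fintype.equivFin V u

variable {G δ}

lemma shiftKey_lt_of_shiftValue_lt {v u u' : V} (h : G.shiftValue δ v u < G.shiftValue δ v u') :
    G.shiftKey δ v u < G.shiftKey δ v u' := by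
  have hu := (Fintype.equivFin V u).isLt
  have hu' := (Fintype.equivFin V u').isLt
  unfold shiftKey
  nlinarith

lemma shiftValue_le_of_shiftKey_le {v u u' : V} (h : G.shiftKey δ v u ≤ G.shiftKey δ v u') :
    G.shiftValue δ v u ≤ G.shiftValue δ v u' :=
  not_lt.1 fun h' => (shiftKey_lt_of_shiftValue_lt h').not_ge h

lemma shiftKey_injective (v : V) : Function.Injective (G.shiftKey δ v) := by
  intro u u' h
  have hval := (shiftValue_le_of_shiftKey_le h.le).antisymm (shiftValue_le_of_shiftKey_le h.ge)
  unfold shiftKey at h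
  rw [hval] at h
  exact (Fintype.equivFin V).injective (Fin.val_injective (by omega))

variable (G δ)

lemma exists_max_shiftKey (v : V) :
    ∃ c, G.Reachable c v ∧ ∀ u, G.Reachable u v → G.shiftKey δ v u ≤ G.shiftKey δ v c := by
  classical
  obtain ⟨c, hc, h⟩ := ({u | G.Reachable u v} : Finset V).exists_max_image (G.shiftKey δ v)
    ⟨v, by simp⟩
  exact ⟨c, by simpa using hc, fun u hu => h u (by simpa using hu)⟩

noncomputable def shiftCenter (v : V) : V := (G.exists_max_shiftKey δ v).choose

lemma shiftCenter_reachable (v : V) : G.Reachable (G.shiftCenter δ v) v :=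
  (G.exists_max_shiftKey δ v).choose_spec.1

variable {G δ}

lemma shiftKey_le_shiftCenter {u v : V} (hu : G.Reachable u v) :
    G.shiftKey δ v u ≤ G.shiftKey δ v (G.shiftCenter δ v) :=
  (G.exists_max_shiftKey δ v).choose_spec.2 u hu

lemma shiftValue_le_shiftCenter {u v : V} (hu : G.Reachable u v) :
    G.shiftValue δ v u ≤ G.shiftValue δ v (G.shiftCenter δ v) :=
  shiftValue_le_of_shiftKey_le (shiftKey_le_shiftCenter hu)

lemma shiftCenter_eq_of_forall_shiftKey_le {v c : V} (hc : G.Reachable c v)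
    (h : ∀ u, G.Reachable u v → G.shiftKey δ v u ≤ G.shiftKey δ v c) : G.shiftCenter δ v = c :=
  shiftKey_injective (G := G) (δ := δ) v <|
    le_antisymm (h _ (G.shiftCenter_reachable δ v)) (shiftKey_le_shiftCenter hc)

lemma shiftCenter_eq_of_forall_shiftValue_lt {v c : V} (hc : G.Reachable c v)
    (h : ∀ u, G.Reachable u v → u ≠ c → G.shiftValue δ v u < G.shiftValue δ v c) :
    G.shiftCenter δ v = c := by
  refine shiftCenter_eq_of_forall_shiftKey_le hc fun u hu => ?_
  obtain rfl | hne := eq_or_ne u c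
  · exact le_rfl
  · exact (shiftKey_lt_of_shiftValue_lt (h u hu hne)).le

variable (G δ)

lemma dist_shiftCenter_le (v : V) : G.dist (G.shiftCenter δ v) v ≤ δ (G.shiftCenter δ v) := by
  have h := shiftValue_le_shiftCenter (G := G) (δ := δ) (Reachable.refl v)
  unfold shiftValue at h
  rw [dist_self] at h
  omega

variable {G δ}

/-- Moving along a geodesic from `v` towards its center raises the value of the center at least
as much as that of any competitor. -/
lemma shiftCenter_eq_of_dist_add_dist_eq {v w c : V} (hc : G.shiftCenter δ v = c)
    (hw : G.Reachable w v) (hd : G.dist c w + G.dist w v = G.dist c v) :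
    G.shiftCenter δ w = c := by
  have hcv : G.Reachable c v := hc ▸ G.shiftCenter_reachable δ v
  refine shiftCenter_eq_of_forall_shiftKey_le (hcv.trans hw.symm) fun u hu => ?_
  have hkey := hc ▸ shiftKey_le_shiftCenter (δ := δ) (hu.trans hw)
  have htri : (G.dist u v : ℤ) ≤ G.dist u w + G.dist w v := by
    exact_mod_cast hu.dist_triangle_left v
  have hgain : (Fintype.card V + 1 : ℤ) * (G.dist u v - G.dist u w) ≤
      (Fintype.card V + 1) * G.dist w v :=
    mul_le_mul_of_nonneg_left (by linarith) (by positivity)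
  have hd' : (G.dist c w : ℤ) + G.dist w v = G.dist c v := by exact_mod_cast hd
  unfold shiftKey shiftValue at hkey ⊢
  nlinarith

lemma shiftCenter_shiftCenter (v : V) : G.shiftCenter δ (G.shiftCenter δ v) = G.shiftCenter δ v :=
  shiftCenter_eq_of_dist_add_dist_eq rfl (G.shiftCenter_reachable δ v) (by simp)

variable (G δ)

noncomputable def shiftCell (u : V) : G.Subgraph :=
  (⊤ : G.Subgraph).induce {w | G.shiftCenter δ w = u}

variable {G δ}

lemma exists_walk_shiftCell_to_center {u w : V} (hw : G.shiftCenter δ w = u) :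
    ∃ p : (G.shiftCell δ u).coe.Walk ⟨w, hw⟩ ⟨u, hw ▸ shiftCenter_shiftCenter w⟩,
      p.length ≤ δ u := by
  classical
  subst hw
  obtain ⟨p, hp⟩ := (G.shiftCenter_reachable δ w).exists_walk_length_eq_dist
  have hsupp : ∀ z ∈ p.reverse.support, G.shiftCenter δ z = G.shiftCenter δ w := by
    intro z hz
    rw [Walk.support_reverse, List.mem_reverse] at hz
    exact shiftCenter_eq_of_dist_add_dist_eq rfl (p.dropUntil z hz).reachable
      (p.dist_add_dist_eq_of_length_eq_dist hp hz)
  obtain ⟨q, hq⟩ := p.reverse.exists_walk_induce_top_length_eq hsupp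
  refine ⟨q, hq.trans_le ?_⟩
  rw [Walk.length_reverse, hp]
  exact G.dist_shiftCenter_le δ w

lemma exists_walk_shiftCell_length_le {u : V} (a b : (G.shiftCell δ u).verts) :
    ∃ p : (G.shiftCell δ u).coe.Walk a b, p.length ≤ 2 * δ u := by
  obtain ⟨pa, hpa⟩ := exists_walk_shiftCell_to_center (G := G) (δ := δ) a.2
  obtain ⟨pb, hpb⟩ := exists_walk_shiftCell_to_center (G := G) (δ := δ) b.2
  refine ⟨pa.append pb.reverse, ?_⟩
  rw [Walk.length_append, Walk.length_reverse]
  omega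

end ShiftClustering

section Padding

variable {V : Type*} [Fintype V] {G : SimpleGraph V} {δ : V → ℕ} {k : ℕ}

variable (G δ k) in
def Dominates (v u : V) : Prop :=
  G.Reachable u v ∧
    ∀ u', G.Reachable u' v → u' ≠ u → G.shiftValue δ v u' + 2 * k < G.shiftValue δ v u

variable (G δ k) in
def IsPadded (v : V) : Prop := ∃ u, G.Dominates δ k v u

lemma Dominates.shiftCenter_eq {v u : V} (h : G.Dominates δ k v u) : G.shiftCenter δ v = u :=
  shiftCenter_eq_of_forall_shiftValue_lt h.1 fun u' hu' hne => by
    have := h.2 u' hu' hne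
    omega

lemma isPadded_iff_dominates_shiftCenter {v : V} :
    G.IsPadded δ k v ↔ G.Dominates δ k v (G.shiftCenter δ v) :=
  ⟨fun ⟨_, hu⟩ => hu.shiftCenter_eq ▸ hu, fun h => ⟨_, h⟩⟩

/-- Moving by at most `k` changes every value by at most `k`, while the dominant vertex leads
by more than `2k`. -/
lemma IsPadded.shiftCenter_eq_of_dist_le {v w : V} (hp : G.IsPadded δ k v)
    (hw : G.Reachable v w) (hd : G.dist v w ≤ k) :
    G.shiftCenter δ w = G.shiftCenter δ v := by
  obtain ⟨u, hu⟩ := hp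
  rw [hu.shiftCenter_eq]
  refine shiftCenter_eq_of_forall_shiftValue_lt (hu.1.trans hw) fun u' hu' hne => ?_
  have hlead := hu.2 u' (hu'.trans hw.symm) hne
  have t₁ : (G.dist u' v : ℤ) ≤ G.dist u' w + G.dist w v := by
    exact_mod_cast hu'.dist_triangle_left v
  have t₂ : (G.dist u w : ℤ) ≤ G.dist u v + G.dist v w := by
    exact_mod_cast hu.1.dist_triangle_left w
  have hvw : G.dist v w = G.dist w v := dist_comm
  unfold shiftValue at hlead ⊢
  omega

lemma dominates_update_of_shiftCenter_eq [DecidableEq V] {v u : V}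
    (hu : G.shiftCenter δ v = u) :
    G.Dominates (Function.update δ u (δ u + (2 * k + 1))) k v u := by
  refine ⟨hu ▸ G.shiftCenter_reachable δ v, fun u' hu' hne => ?_⟩
  have hle := hu ▸ shiftValue_le_shiftCenter (δ := δ) hu'
  unfold shiftValue at hle ⊢
  rw [Function.update_of_ne hne, Function.update_self]
  push_cast
  omega

lemma eq_of_mem_edgeSet_shiftCell {u u' : V} {e : Sym2 V} (h : e ∈ (G.shiftCell δ u).edgeSet)
    (h' : e ∈ (G.shiftCell δ u').edgeSet) : u = u' := by
  induction e using Sym2.ind with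
  | _ a b =>
    rw [Subgraph.mem_edgeSet] at h h'
    exact h.1.symm.trans h'.1

end Padding

end SimpleGraph

lemma farApart_of_shiftCenter_ne {V : Type} [Fintype V] {G : SimpleGraph V} {δ : V → ℕ}
    {k : ℕ} {A B : Set V} {c c' : V} (hA : ∀ a ∈ A, G.IsPadded δ k a ∧ G.shiftCenter δ a = c)
    (hB : ∀ b ∈ B, G.shiftCenter δ b = c') (hne : c ≠ c') : FarApart G k A B := by
  intro a ha b hb p
  by_contra! hlen
  obtain ⟨hpad, rfl⟩ := hA a ha
  exact hne (hB b hb ▸ hpad.shiftCenter_eq_of_dist_le ⟨p⟩ ((dist_le p).trans hlen)).symm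

theorem exists_clusterCollection_of_shift {V : Type} [Fintype V] (G : SimpleGraph V)
    (δ : V → ℕ) {R k β κ : ℕ} (hδ : ∀ u, δ u ≤ R) (hβ : 2 * R ≤ β) (hκ : 1 ≤ κ) (S : Set V) :
    ∃ CC : ClusterCollection G β κ, (∀ i, CC.cluster i ⊆ S) ∧
      (⋃ i, CC.cluster i) = {v ∈ S | G.IsPadded δ k v} ∧
      ∀ i j, i ≠ j → FarApart G k (CC.cluster i) (CC.cluster j) := by
  let e := (Fintype.equivFin V).symm
  let CC : ClusterCollection G β κ :=
    { p := Fintype.card V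
      cluster := fun i => {v ∈ S | G.IsPadded δ k v ∧ G.shiftCenter δ v = e i}
      tree := fun i => G.shiftCell δ (e i)
      disjoint := fun i j hij => Set.disjoint_left.2 fun v hi hj =>
        hij (e.injective (hi.2.2.symm.trans hj.2.2))
      subset_tree := fun i v hv => hv.2.2
      connected := fun i a b => (exists_walk_shiftCell_length_le a b).elim fun p _ => ⟨p⟩
      radius := fun i a b => (exists_walk_shiftCell_length_le a b).imp fun p hp =>
        hp.trans ((Nat.mul_le_mul_left 2 (hδ (e i))).trans hβ)
      congestion := fun _ _ => ((Set.ncard_le_one_iff (Set.toFinite _)).2 fun hi hj =>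
        e.injective (eq_of_mem_edgeSet_shiftCell hi hj)).trans hκ }
  refine ⟨CC, fun i v hv => hv.1, ?_, fun i j hij =>
    farApart_of_shiftCenter_ne (fun a ha => ha.2) (fun b hb => hb.2.2) (e.injective.ne hij)⟩
  ext v
  simp only [CC, Set.mem_iUnion, Set.mem_ofPred_eq]
  exact ⟨fun ⟨_, hS, hp, _⟩ => ⟨hS, hp⟩, fun ⟨hS, hp⟩ => ⟨e.symm (G.shiftCenter δ v), hS, hp,
    (e.apply_symm_apply _).symm⟩⟩

section ShiftWeight

variable {V : Type*} [Fintype V]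

/-- On `boundedShifts V R` this is, up to normalisation, the law of independent geometric shifts
of ratio `q` truncated to `[0, R)`. -/
def shiftWeight (q : ℝ) (δ : V → ℕ) : ℝ := ∏ u, q ^ δ u

variable {q : ℝ}

lemma shiftWeight_nonneg (hq : 0 ≤ q) (δ : V → ℕ) : 0 ≤ shiftWeight q δ :=
  prod_nonneg fun _ _ => pow_nonneg hq _

lemma shiftWeight_pos (hq : 0 < q) (δ : V → ℕ) : 0 < shiftWeight q δ :=
  prod_pos fun _ _ => pow_pos hq _

variable [DecidableEq V]

variable (V) in
def boundedShifts (R : ℕ) : Finset (V → ℕ) := Fintype.piFinset fun _ => range R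

lemma mem_boundedShifts {R : ℕ} {δ : V → ℕ} : δ ∈ boundedShifts V R ↔ ∀ u, δ u < R := by
  simp [boundedShifts]

lemma shiftWeight_update_add (q : ℝ) (δ : V → ℕ) (u : V) (s : ℕ) :
    shiftWeight q (Function.update δ u (δ u + s)) = q ^ s * shiftWeight q δ := by
  simp only [shiftWeight, Function.apply_update (fun _ j => q ^ j)]
  rw [prod_update_of_mem (mem_univ u), ← mul_prod_erase univ _ (mem_univ u),
    sdiff_singleton_eq_erase, pow_add, mul_assoc, mul_left_comm]

lemma sum_shiftWeight_piFinset_update (q : ℝ) (R : ℕ) (u : V) (t : Finset ℕ) :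
    ∑ δ ∈ Fintype.piFinset (Function.update (fun _ => range R) u t), shiftWeight q δ =
      (∑ j ∈ t, q ^ j) * ∏ _v ∈ univ \ {u}, ∑ j ∈ range R, q ^ j := by
  simp only [shiftWeight]
  rw [← prod_univ_sum]
  simp only [Function.apply_update (fun _ (s : Finset ℕ) => ∑ j ∈ s, q ^ j)]
  exact prod_update_of_mem (mem_univ u) _ _

/-- The relative weight of `M ≤ δ u` is `q^M (1 - q^s) / (1 - q^(M+s))` (geometric series). -/
lemma sum_shiftWeight_filter_le_apply_le (hq : 0 ≤ q) (u : V) {M s : ℕ}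
    (hhalf : q ^ (M + s) ≤ 1 / 2) :
    ∑ δ ∈ boundedShifts V (M + s) with M ≤ δ u, shiftWeight q δ ≤
      2 * q ^ M * (1 - q ^ s) * ∑ δ ∈ boundedShifts V (M + s), shiftWeight q δ := by
  have htail : (boundedShifts V (M + s)).filter (fun δ : V → ℕ => M ≤ δ u) =
      Fintype.piFinset (Function.update (fun _ => range (M + s)) u (Ico M (M + s))) := by
    ext δ
    simp only [mem_filter, mem_boundedShifts, Fintype.mem_piFinset, Function.update_apply]
    constructor
    · rintro ⟨hR, hM⟩ v
      split_ifs with hv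
      · subst hv; exact mem_Ico.2 ⟨hM, hR v⟩
      · exact mem_range.2 (hR v)
    · intro h
      refine ⟨fun v => ?_, (mem_Ico.1 (by simpa using h u)).1⟩
      have := h v
      split_ifs at this with hv
      · exact (mem_Ico.1 this).2
      · exact mem_range.1 this
  have hall : boundedShifts V (M + s) =
      Fintype.piFinset (Function.update (fun _ : V => range (M + s)) u (range (M + s))) := by
    rw [Function.update_eq_self_iff.2 rfl]; rfl
  rw [htail, hall, sum_shiftWeight_piFinset_update, sum_shiftWeight_piFinset_update,
    sum_Ico_eq_sum_range, Nat.add_sub_cancel_left]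
  simp only [pow_add, ← mul_sum]
  have hP : 0 ≤ ∏ _v ∈ univ \ {u}, ∑ j ∈ range (M + s), q ^ j :=
    prod_nonneg fun _ _ => sum_nonneg fun _ _ => pow_nonneg hq _
  have ha := geom_sum_mul_neg q s
  have hZ := geom_sum_mul_neg q (M + s)
  have ha0 : 0 ≤ q ^ M * ∑ j ∈ range s, q ^ j :=
    mul_nonneg (pow_nonneg hq _) (sum_nonneg fun _ _ => pow_nonneg hq _)
  rw [← mul_assoc]
  refine mul_le_mul_of_nonneg_right ?_ hP
  rw [← ha]
  rw [pow_add] at hhalf hZ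
  nlinarith

section PaddingWeight

open scoped Classical

variable {V : Type*} [Fintype V] [DecidableEq V] (G : SimpleGraph V) {q : ℝ} {k M : ℕ}

/-- Raising the shift of the center by `2k + 1` makes it dominant, at the cost of a factor
`q ^ (2k + 1)` in weight. -/
lemma mul_sum_shiftWeight_shiftCenter_eq_le (hq : 0 ≤ q) (v u : V) :
    q ^ (2 * k + 1) * ∑ δ ∈ boundedShifts V (M + (2 * k + 1)) with
        G.shiftCenter δ v = u ∧ δ u < M, shiftWeight q δ ≤
      ∑ δ ∈ boundedShifts V (M + (2 * k + 1)) with G.Dominates δ k v u, shiftWeight q δ := by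
  set raise : (V → ℕ) → V → ℕ := fun δ => Function.update δ u (δ u + (2 * k + 1))
  have hraise : Function.Injective raise := by
    intro δ δ' h
    have hu : δ u = δ' u := by simpa [raise] using congrFun h u
    funext w
    obtain rfl | hw := eq_or_ne w u
    · exact hu
    · simpa [raise, Function.update_of_ne hw] using congrFun h w
  have hmaps : ∀ δ ∈ (boundedShifts V (M + (2 * k + 1))).filter
      (fun δ => G.shiftCenter δ v = u ∧ δ u < M),
      raise δ ∈ (boundedShifts V (M + (2 * k + 1))).filter (fun δ => G.Dominates δ k v u) := by
    intro δ hδ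
    simp only [mem_filter, mem_boundedShifts] at hδ ⊢
    obtain ⟨hR, hc, hM⟩ := hδ
    refine ⟨fun w => ?_, dominates_update_of_shiftCenter_eq hc⟩
    obtain rfl | hw := eq_or_ne w u
    · simp only [raise, Function.update_self]
      omega
    · simpa [raise, Function.update_of_ne hw] using hR w
  calc _ = ∑ δ ∈ boundedShifts V (M + (2 * k + 1)) with G.shiftCenter δ v = u ∧ δ u < M,
        shiftWeight q (raise δ) := by simp only [raise, mul_sum, shiftWeight_update_add]
    _ = ∑ δ ∈ ((boundedShifts V (M + (2 * k + 1))).filter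
          (fun δ => G.shiftCenter δ v = u ∧ δ u < M)).image raise, shiftWeight q δ :=
        (sum_image fun _ _ _ _ h => hraise h).symm
    _ ≤ _ := sum_le_sum_of_subset_of_nonneg (image_subset_iff.2 hmaps)
        fun δ _ _ => shiftWeight_nonneg hq δ

lemma sum_shiftWeight_shiftCenter_eq_not_dominates_le (hq₀ : 0 ≤ q) (hq₁ : q ≤ 1)
    (hhalf : q ^ (M + (2 * k + 1)) ≤ 1 / 2) (v u : V) :
    ∑ δ ∈ boundedShifts V (M + (2 * k + 1)) with
        G.shiftCenter δ v = u ∧ ¬ G.Dominates δ k v u, shiftWeight q δ ≤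
      (1 - q ^ (2 * k + 1)) * ∑ δ ∈ boundedShifts V (M + (2 * k + 1)) with
          G.shiftCenter δ v = u, shiftWeight q δ +
        2 * q ^ M * (1 - q ^ (2 * k + 1)) *
          ∑ δ ∈ boundedShifts V (M + (2 * k + 1)), shiftWeight q δ := by
  have hraise := mul_sum_shiftWeight_shiftCenter_eq_le G (k := k) (M := M) hq₀ v u
  have hgeom := sum_shiftWeight_filter_le_apply_le hq₀ u hhalf
  set Ω := boundedShifts V (M + (2 * k + 1))
  have hD : (Ω.filter fun δ => G.shiftCenter δ v = u).filter (G.Dominates · k v u) =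
      Ω.filter (G.Dominates · k v u) := by
    rw [filter_filter]
    exact filter_congr fun δ _ => ⟨And.right, fun h => ⟨h.shiftCenter_eq, h⟩⟩
  have hdom : ∑ δ ∈ Ω with G.shiftCenter δ v = u ∧ ¬ G.Dominates δ k v u, shiftWeight q δ +
      ∑ δ ∈ Ω with G.Dominates δ k v u, shiftWeight q δ =
      ∑ δ ∈ Ω with G.shiftCenter δ v = u, shiftWeight q δ := by
    rw [← sum_filter_add_sum_filter_not (Ω.filter fun δ => G.shiftCenter δ v = u)
      (G.Dominates · k v u), hD, filter_filter, add_comm]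
  have hsplit : ∑ δ ∈ Ω with G.shiftCenter δ v = u, shiftWeight q δ =
      ∑ δ ∈ Ω with G.shiftCenter δ v = u ∧ δ u < M, shiftWeight q δ +
        ∑ δ ∈ Ω with G.shiftCenter δ v = u ∧ ¬ δ u < M, shiftWeight q δ := by
    rw [← sum_filter_add_sum_filter_not (Ω.filter fun δ => G.shiftCenter δ v = u) (· u < M),
      filter_filter, filter_filter]
  have htail : ∑ δ ∈ Ω with G.shiftCenter δ v = u ∧ ¬ δ u < M, shiftWeight q δ ≤
      ∑ δ ∈ Ω with M ≤ δ u, shiftWeight q δ :=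
    sum_le_sum_of_subset_of_nonneg (fun δ hδ => by
        simp only [mem_filter] at hδ ⊢
        exact ⟨hδ.1, not_lt.1 hδ.2.2⟩) fun δ _ _ => shiftWeight_nonneg hq₀ δ
  have hqT : q ^ (2 * k + 1) * ∑ δ ∈ Ω with G.shiftCenter δ v = u ∧ ¬ δ u < M, shiftWeight q δ ≤
      ∑ δ ∈ Ω with G.shiftCenter δ v = u ∧ ¬ δ u < M, shiftWeight q δ :=
    mul_le_of_le_one_left (sum_nonneg fun δ _ => shiftWeight_nonneg hq₀ δ) (pow_le_one₀ hq₀ hq₁)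
  have hmul := congrArg (q ^ (2 * k + 1) * ·) hsplit
  simp only [mul_add] at hmul
  linarith

lemma sum_shiftWeight_not_isPadded_le (hq₀ : 0 ≤ q) (hq₁ : q ≤ 1)
    (hhalf : q ^ (M + (2 * k + 1)) ≤ 1 / 2) (v : V) :
    ∑ δ ∈ boundedShifts V (M + (2 * k + 1)) with ¬ G.IsPadded δ k v, shiftWeight q δ ≤
      (1 - q ^ (2 * k + 1)) * (1 + 2 * Fintype.card V * q ^ M) *
        ∑ δ ∈ boundedShifts V (M + (2 * k + 1)), shiftWeight q δ := by
  set Ω := boundedShifts V (M + (2 * k + 1))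
  have hcell : ∀ u, ∑ δ ∈ Ω with ¬ G.IsPadded δ k v ∧ G.shiftCenter δ v = u, shiftWeight q δ =
      ∑ δ ∈ Ω with G.shiftCenter δ v = u ∧ ¬ G.Dominates δ k v u, shiftWeight q δ := by
    intro u
    refine sum_congr (filter_congr fun δ _ => ?_) fun _ _ => rfl
    rw [isPadded_iff_dominates_shiftCenter]
    exact ⟨fun ⟨h, hu⟩ => ⟨hu, hu ▸ h⟩, fun ⟨hu, h⟩ => ⟨hu ▸ h, hu⟩⟩
  rw [← sum_fiberwise (Ω.filter _) (G.shiftCenter · v)]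
  simp only [filter_filter, hcell]
  calc _ ≤ ∑ u, ((1 - q ^ (2 * k + 1)) * ∑ δ ∈ Ω with G.shiftCenter δ v = u, shiftWeight q δ +
          2 * q ^ M * (1 - q ^ (2 * k + 1)) * ∑ δ ∈ Ω, shiftWeight q δ) :=
        sum_le_sum fun u _ => sum_shiftWeight_shiftCenter_eq_not_dominates_le G hq₀ hq₁ hhalf v u
    _ = _ := by
      rw [sum_add_distrib, ← mul_sum, sum_fiberwise, sum_const, card_univ, nsmul_eq_mul]
      ring

end PaddingWeight

lemma exists_card_filter_le_of_forall_sum_filter_le {ι α : Type*} {Ω : Finset ι}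
    (hΩ : Ω.Nonempty) {w : ι → ℝ} (hw : ∀ ω ∈ Ω, 0 < w ω) (B : ι → α → Prop)
    [∀ ω a, Decidable (B ω a)] (s : Finset α) {ε : ℝ}
    (h : ∀ a ∈ s, ∑ ω ∈ Ω with B ω a, w ω ≤ ε * ∑ ω ∈ Ω, w ω) :
    ∃ ω ∈ Ω, (#{a ∈ s | B ω a} : ℝ) ≤ ε * #s := by
  have hsum : ∑ ω ∈ Ω, w ω * #{a ∈ s | B ω a} ≤ ∑ ω ∈ Ω, w ω * (ε * #s) :=
    calc ∑ ω ∈ Ω, w ω * #{a ∈ s | B ω a} = ∑ a ∈ s, ∑ ω ∈ Ω with B ω a, w ω := by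
          simp only [card_filter, Nat.cast_sum, Nat.cast_ite, Nat.cast_one, Nat.cast_zero,
            mul_sum, mul_ite, mul_one, mul_zero, sum_filter]
          exact sum_comm
      _ ≤ ∑ a ∈ s, ε * ∑ ω ∈ Ω, w ω := sum_le_sum h
      _ = ∑ ω ∈ Ω, w ω * (ε * #s) := by
          rw [sum_const, ← sum_mul, nsmul_eq_mul]
          ring
  obtain ⟨ω, hω, hle⟩ := exists_le_of_sum_le hΩ hsum
  exact ⟨ω, hω, le_of_mul_le_mul_left hle (hw ω hω)⟩

lemma one_sub_mul_ncard_le_ncard_sep {α : Type*} (S : Set α) [Fintype S] {P : α → Prop}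
    [DecidablePred P] {ε : ℝ} (h : (#{v ∈ S.toFinset | ¬ P v} : ℝ) ≤ ε * #S.toFinset) :
    (1 - ε) * S.ncard ≤ ({v ∈ S | P v}.ncard : ℝ) := by
  have hsep : {v ∈ S | P v} = ↑(S.toFinset.filter P) := by ext; simp
  have hsplit := card_filter_add_card_filter_not (s := S.toFinset) P
  rw [hsep, Set.ncard_coe_finset, Set.ncard_eq_toFinset_card']
  rw [← hsplit] at h ⊢
  push_cast at h ⊢
  linarith

open scoped Classical in
lemma exists_shift_card_not_isPadded_le {V : Type*} [Fintype V] [DecidableEq V]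
    (G : SimpleGraph V) {q : ℝ} {k M : ℕ} (hq₀ : 0 < q) (hq₁ : q ≤ 1)
    (hhalf : q ^ (M + (2 * k + 1)) ≤ 1 / 2) (s : Finset V) :
    ∃ δ ∈ boundedShifts V (M + (2 * k + 1)), (#{v ∈ s | ¬ G.IsPadded δ k v} : ℝ) ≤
      (1 - q ^ (2 * k + 1)) * (1 + 2 * Fintype.card V * q ^ M) * #s :=
  exists_card_filter_le_of_forall_sum_filter_le ⟨0, mem_boundedShifts.2 fun _ => by simp⟩
    (fun δ _ => shiftWeight_pos hq₀ δ) _ s fun v _ =>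
      sum_shiftWeight_not_isPadded_le G hq₀.le hq₁ hhalf v

section Parameters

open Real

lemma one_sub_pow_ceil_log_div_le {p a : ℝ} (hp₀ : 0 < p) (hp₁ : p ≤ 1) (ha : 0 < a) :
    (1 - p) ^ ⌈log a / p⌉₊ ≤ a⁻¹ := by
  have hM : log a ≤ ⌈log a / p⌉₊ * p := (div_le_iff₀ hp₀).1 (Nat.le_ceil _)
  calc (1 - p) ^ ⌈log a / p⌉₊ ≤ exp (-p) ^ ⌈log a / p⌉₊ :=
        pow_le_pow_left₀ (by linarith) (one_sub_le_exp_neg p) _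
    _ = exp (-(⌈log a / p⌉₊ * p)) := by rw [← exp_nat_mul]; ring_nf
    _ ≤ exp (-log a) := exp_le_exp.2 (by linarith)
    _ = a⁻¹ := by rw [exp_neg, exp_log ha]

lemma one_le_logb_two {n : ℝ} (hn : 2 ≤ n) : 1 ≤ logb 2 n :=
  (le_logb_iff_rpow_le one_lt_two (by linarith)).2 (by simpa using hn)

lemma log_two_mul_le_two_mul_logb_two {n : ℝ} (hn : 2 ≤ n) : log (2 * n) ≤ 2 * logb 2 n := by
  have hlog2 : 0 < log 2 := log_pos one_lt_two
  have hlog2n : log 2 ≤ log n := log_le_log two_pos hn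
  have hlogn : log n ≤ logb 2 n := by
    rw [logb, le_div_iff₀ hlog2]
    nlinarith [log_two_lt_d9]
  rw [log_mul two_ne_zero (by linarith)]
  linarith

/-- The truncated geometric shifts have ratio `q = 1 - 1/(2x(2k+1))` and range `M + 2k + 1`:
`q ^ (2k+1) ≥ 1 - 1/(2x)` by Bernoulli, and `q ^ M ≤ 1/(2n)` once `M ≥ 2x(2k+1) log (2n)`. -/
lemma exists_shift_parameters {n k : ℕ} {x : ℝ} (hn : 2 ≤ n) (hk : 1 ≤ k) (hx : 1 ≤ x) :
    ∃ (q : ℝ) (M : ℕ), 0 < q ∧ q ≤ 1 ∧ 2 * n * q ^ M ≤ 1 ∧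
      1 - q ^ (2 * k + 1) ≤ (2 * x)⁻¹ ∧ 2 * ((M : ℝ) + 2 * k) ≤ 30 * k * x * logb 2 n ^ 3 := by
  have hk' : (1 : ℝ) ≤ k := by exact_mod_cast hk
  have hn' : (2 : ℝ) ≤ n := by exact_mod_cast hn
  set p : ℝ := (2 * x * (2 * k + 1))⁻¹ with hp
  have hp₀ : 0 < p := by positivity
  have hkp : (2 * k + 1 : ℝ) * p = (2 * x)⁻¹ := by
    rw [hp]
    field_simp
  have hp₁ : p ≤ 2⁻¹ := inv_anti₀ two_pos (by nlinarith)
  refine ⟨1 - p, ⌈log (2 * n) / p⌉₊, by linarith, by linarith, ?_, ?_, ?_⟩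
  · calc (2 * n : ℝ) * (1 - p) ^ ⌈log (2 * n) / p⌉₊ ≤ 2 * n * (2 * n : ℝ)⁻¹ := by
          gcongr
          exact one_sub_pow_ceil_log_div_le hp₀ (by linarith) (by positivity)
      _ = 1 := mul_inv_cancel₀ (by positivity)
  · have hbern := one_add_mul_le_pow (a := -p) (by linarith) (2 * k + 1)
    push_cast at hbern
    rw [← sub_eq_add_neg] at hbern
    linarith
  · set L := logb 2 n
    have hL : 1 ≤ L := one_le_logb_two hn'
    have hM : (⌈log (2 * n) / p⌉₊ : ℝ) ≤ 2 * x * (2 * k + 1) * (2 * L) + 1 := by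
      refine (Nat.ceil_lt_add_one (div_nonneg (log_nonneg (by linarith)) hp₀.le)).le.trans ?_
      rw [hp, div_inv_eq_mul, mul_comm]
      gcongr
      exact log_two_mul_le_two_mul_logb_two hn'
    have hxL : 1 ≤ x * L := one_le_mul_of_one_le_of_one_le hx hL
    have hkxL : x * L ≤ k * (x * L) := le_mul_of_one_le_left (by linarith) hk'
    have hk_le : (k : ℝ) ≤ k * (x * L) := le_mul_of_one_le_right (by linarith) hxL
    have hL3 : k * x * L ≤ k * x * L ^ 3 := by
      gcongr
      exact le_self_pow₀ hL (by norm_num)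
    nlinarith

end Parameters

theorem statement3 :
    ∃ c₁ c₂ : ℝ, 0 < c₁ ∧ 0 < c₂ ∧
      ∀ (n : ℕ), 2 ≤ n →
      ∀ (V : Type) [Fintype V] (G : SimpleGraph V),
        Fintype.card V ≤ n →
        ∀ S : Set V, ∀ k : ℕ, 1 ≤ k → ∀ x : ℝ, 1 ≤ x →
          ∃ CC : ClusterCollection G
              ⌈c₁ * k * x * (Real.logb 2 n) ^ 3⌉₊
              ⌈c₂ * Real.logb 2 n * min (k : ℝ) (x * (Real.logb 2 n) ^ 2)⌉₊,
            (∀ i, CC.cluster i ⊆ S) ∧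
            ((1 - 1 / x) * S.ncard ≤ ((⋃ i, CC.cluster i).ncard : ℝ)) ∧
            (∀ i j, i ≠ j → FarApart G k (CC.cluster i) (CC.cluster j)) := by
  refine ⟨30, 1, by norm_num, by norm_num, fun n hn V _ G hcard S k hk x hx => ?_⟩
  classical
  have hn' : (2 : ℝ) ≤ n := by exact_mod_cast hn
  have hL := one_le_logb_two hn'
  obtain ⟨q, M, hq₀, hq₁, hqM, hqk, hβ⟩ := exists_shift_parameters hn hk hx
  have hqM₀ := pow_nonneg hq₀.le M
  have hhalf : q ^ (M + (2 * k + 1)) ≤ 1 / 2 := by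
    have := pow_le_pow_of_le_one hq₀.le hq₁ (Nat.le_add_right M (2 * k + 1))
    nlinarith
  have hbad : (1 - q ^ (2 * k + 1)) * (1 + 2 * Fintype.card V * q ^ M) ≤ 1 / x := by
    have hV : (Fintype.card V : ℝ) ≤ n := by exact_mod_cast hcard
    have hqk₀ : 0 ≤ 1 - q ^ (2 * k + 1) := sub_nonneg.2 (pow_le_one₀ hq₀.le hq₁)
    calc _ ≤ (2 * x)⁻¹ * 2 := by gcongr; nlinarith
      _ = 1 / x := by field_simp
  have hκ : 0 < 1 * Real.logb 2 n * min (k : ℝ) (x * Real.logb 2 n ^ 2) := by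
    have hk' : (1 : ℝ) ≤ k := by exact_mod_cast hk
    exact mul_pos (by linarith) (lt_min (by linarith) (by nlinarith))
  obtain ⟨δ, hδ, hpad⟩ := exists_shift_card_not_isPadded_le G hq₀ hq₁ hhalf S.toFinset
  obtain ⟨CC, hsub, hcover, hfar⟩ := exists_clusterCollection_of_shift G δ (R := M + 2 * k) (k := k)
    (fun u => Nat.le_of_lt_succ (mem_boundedShifts.1 hδ u))
    (Nat.cast_le.1 ((by push_cast; linarith : _ ≤ (30 : ℝ) * k * x * Real.logb 2 n ^ 3).trans (Nat.le_ceil _)))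
    (Nat.one_le_ceil_iff.2 hκ) S
  refine ⟨CC, hsub, hcover ▸ one_sub_mul_ncard_le_ncard_sep S ?_, hfar⟩
  exact hpad.trans (mul_le_mul_of_nonneg_right hbad (Nat.cast_nonneg _))
end ShiftWeight
end

section
/- Let G be a finite simple graph, let k ≥ 1 be an integer, and let C₁,…,C_p be pairwise disjoint nonempty vertex sets ('clusters') of G. Then there exists a finite family of subgraphs of G, each of which is a tree with a designated root, such that: (1) the root and every leaf of each tree is a vertex of some cluster; (2) every vertex of each tree is at distance at most k from the root within that tree; (3) every cluster C_i that is not distance-k isolated contains exactly one vertex w that is a leaf of a tree in the family whose root lies in a cluster different from C_i; and (4) every edge of G belongs to at most 4 of the trees in the family. -/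
open SimpleGraph

/-- `IsLeaf G T r v` : `v` is a leaf of the rooted tree `T` (a subgraph of `G`) with
root `r`, i.e. `v` is a vertex of `T` distinct from the root with exactly one
neighbour inside `T`. -/
def IsLeaf {V : Type} {G : SimpleGraph V} (T : G.Subgraph) (r v : V) : Prop :=
  v ∈ T.verts ∧ v ≠ r ∧ (T.neighborSet v).ncard = 1

/-- `WithinTreeDist G T u v d` : `u` and `v` are vertices of the subgraph `T` joined by
a walk of length at most `d` inside `T`. -/
def WithinTreeDist {V : Type} {G : SimpleGraph V} (T : G.Subgraph) (u v : V) (d : ℕ) : Prop :=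
  ∃ (hu : u ∈ T.verts) (hv : v ∈ T.verts) (w : T.coe.Walk ⟨u, hu⟩ ⟨v, hv⟩), w.length ≤ d

/-- A cluster `C i` is distance-`k` isolated (within the collection `C`) if every other
cluster is at `G`-distance strictly greater than `k` from it. -/
def DistIsolated {V : Type} (G : SimpleGraph V) (k : ℕ) {p : ℕ}
    (C : Fin p → Set V) (i : Fin p) : Prop :=
  ∀ j, j ≠ i → FarApart G k (C i) (C j)

/-! Grow a shortest-path forest from the union `S` of the clusters, so that every vertex reaching
`S` follows parent pointers to a nearest vertex of `S`, its root. On a walk of length at most `k`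
from `C i` to another cluster there is an edge `u v` such that the root of `u` lies in `C i` and the
root of `v` does not, and `depth u + 1 + depth v ≤ k`. Keep one such connector per non-isolated
cluster, with leaf `ℓ = root u`. The tree rooted at a vertex `ρ` consists of the forest paths from
`v` to `ρ`, the edges `u v` and the forest paths from `u` to `ℓ`, over all connectors with
`root v = ρ`. Ranking its vertices by their distance to `ρ` along these paths makes every vertex but
`ρ` point to a neighbour of smaller rank, so it is a tree of depth at most `k` whose leaves are the
`ℓ`. A vertex `w` lies only in the trees rooted at `root w` and at `root v` for the connector with
leaf `root w`, so every edge lies in at most two trees. -/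

section ParentTree

variable {V : Type} {G : SimpleGraph V} {Q : Set V} {ρ : V} {par : V → V} {rk : V → ℕ}

def parentTree (G : SimpleGraph V) (Q : Set V) (ρ : V) (par : V → V) : G.Subgraph where
  verts := Q
  Adj x y := x ∈ Q ∧ y ∈ Q ∧ G.Adj x y ∧ ((x ≠ ρ ∧ y = par x) ∨ (y ≠ ρ ∧ x = par y))
  adj_sub h := h.2.2.1
  edge_vert h := h.1
  symm := ⟨fun _ _ h => ⟨h.2.1, h.1, h.2.2.1.symm, h.2.2.2.symm⟩⟩

def IsParentMap (G : SimpleGraph V) (Q : Set V) (ρ : V) (par : V → V) (rk : V → ℕ) : Prop :=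
  ∀ w ∈ Q, w ≠ ρ → par w ∈ Q ∧ G.Adj w (par w) ∧ rk w = rk (par w) + 1

namespace IsParentMap

variable (h : IsParentMap G Q ρ par rk)
include h

theorem exists_walk_to_root (hρ : ρ ∈ Q) {w : V} (hw : w ∈ Q) :
    ∃ p : (parentTree G Q ρ par).coe.Walk ⟨w, hw⟩ ⟨ρ, hρ⟩, p.length ≤ rk w := by
  induction hn : rk w generalizing w with
  | zero =>
    obtain rfl : w = ρ := by_contra fun hwρ => by have := (h w hw hwρ).2.2; omega
    exact ⟨.nil, le_rfl⟩
  | succ n ih =>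
    by_cases hwρ : w = ρ
    · subst hwρ
      exact ⟨.nil, Nat.zero_le _⟩
    obtain ⟨hpar, hadj, hrk⟩ := h w hw hwρ
    obtain ⟨p, hp⟩ := ih hpar (by omega)
    exact ⟨.cons ⟨hw, hpar, hadj, .inl ⟨hwρ, rfl⟩⟩ p, by change p.length + 1 ≤ _; omega⟩

theorem connected (hρ : ρ ∈ Q) : (parentTree G Q ρ par).coe.Connected := by
  have hreach (a : (parentTree G Q ρ par).verts) :
      (parentTree G Q ρ par).coe.Reachable a ⟨ρ, hρ⟩ :=
    (h.exists_walk_to_root hρ a.2).choose.reachable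
  exact (connected_iff _).mpr ⟨fun a b => (hreach a).trans (hreach b).symm, ⟨⟨ρ, hρ⟩⟩⟩

theorem eq_par_of_adj {x y : V} (hxy : (parentTree G Q ρ par).Adj x y) (hle : rk y ≤ rk x) :
    y = par x := by
  obtain ⟨-, hy, -, ⟨-, rfl⟩ | ⟨hyρ, rfl⟩⟩ := hxy
  · rfl
  · have := (h y hy hyρ).2.2
    omega

/-- Both cycle-neighbours of a vertex of maximal rank on a cycle would be its parent. -/
theorem isAcyclic : (parentTree G Q ρ par).coe.IsAcyclic := by
  classical
  intro x₀ c hc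
  obtain ⟨x, hx, hmax⟩ :=
    c.support.toFinset.exists_max_image (fun a => rk a.1) ⟨x₀, by simp⟩
  rw [List.mem_toFinset] at hx
  have hc' := hc.rotate hx
  have hle (y) (hy : y ∈ (c.rotate x hx).support) : rk y.1 ≤ rk x.1 :=
    hmax y (by simpa using hy)
  have hnil := hc'.not_nil
  apply hc'.snd_ne_penultimate
  apply Subtype.ext
  rw [h.eq_par_of_adj (Walk.adj_snd hnil) (hle _ (Walk.getVert_mem_support _ _)),
    h.eq_par_of_adj (Walk.adj_penultimate hnil).symm (hle _ (Walk.getVert_mem_support _ _))]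

theorem isTree (hρ : ρ ∈ Q) : (parentTree G Q ρ par).coe.IsTree :=
  ⟨h.connected hρ, h.isAcyclic⟩

theorem isLeaf_iff {w : V} :
    IsLeaf (parentTree G Q ρ par) ρ w ↔ w ∈ Q ∧ w ≠ ρ ∧ ∀ y ∈ Q, y ≠ ρ → par y ≠ w := by
  constructor
  · rintro ⟨hw, hwρ, hcard⟩
    refine ⟨hw, hwρ, fun y hy hyρ hyw => ?_⟩
    obtain ⟨a, ha⟩ := Set.ncard_eq_one.mp hcard
    obtain ⟨hpar, hadj, hrk⟩ := h w hw hwρ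
    obtain ⟨-, hadj', hrk'⟩ := h y hy hyρ
    have h1 : par w ∈ (parentTree G Q ρ par).neighborSet w := ⟨hw, hpar, hadj, .inl ⟨hwρ, rfl⟩⟩
    have h2 : y ∈ (parentTree G Q ρ par).neighborSet w :=
      ⟨hw, hy, hyw ▸ hadj'.symm, .inr ⟨hyρ, hyw.symm⟩⟩
    rw [ha, Set.mem_singleton_iff] at h1 h2
    rw [hyw, h2, ← h1] at hrk'
    omega
  · rintro ⟨hw, hwρ, hchild⟩
    obtain ⟨hpar, hadj, -⟩ := h w hw hwρ
    refine ⟨hw, hwρ, Set.ncard_eq_one.mpr ⟨par w, Set.ext fun y => ⟨?_, ?_⟩⟩⟩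
    · rintro ⟨-, hy, -, ⟨-, rfl⟩ | ⟨hyρ, rfl⟩⟩
      · rfl
      · exact absurd rfl (hchild y hy hyρ)
    · rintro rfl
      exact ⟨hw, hpar, hadj, .inl ⟨hwρ, rfl⟩⟩

end IsParentMap

end ParentTree

namespace SetForest

variable {V : Type} (G : SimpleGraph V) (S : Set V)

def Reaches (v : V) : Prop := ∃ s ∈ S, G.Reachable v s

/-- The distance from `v` to `S`; it is `sInf ∅ = 0` when `v` does not reach `S`. -/
noncomputable def depth (v : V) : ℕ := sInf {n | ∃ s ∈ S, ∃ p : G.Walk v s, p.length = n}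

variable {G S} {u v w x : V}

theorem depth_le_length {s : V} (hs : s ∈ S) (p : G.Walk v s) : depth G S v ≤ p.length :=
  Nat.sInf_le ⟨s, hs, p, rfl⟩

theorem depth_eq_zero_of_mem (hv : v ∈ S) : depth G S v = 0 :=
  Nat.eq_zero_of_le_zero (depth_le_length hv .nil)

namespace Reaches

theorem of_adj (h : Reaches G S v) (hadj : G.Adj u v) : Reaches G S u :=
  let ⟨s, hs, hvs⟩ := h
  ⟨s, hs, hadj.reachable.trans hvs⟩

theorem exists_walk_length_eq_depth (h : Reaches G S v) :
    ∃ s ∈ S, ∃ p : G.Walk v s, p.length = depth G S v := by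
  obtain ⟨s, hs, ⟨p⟩⟩ := h
  have hne : {n | ∃ s ∈ S, ∃ p : G.Walk v s, p.length = n}.Nonempty := ⟨_, s, hs, p, rfl⟩
  exact Nat.sInf_mem hne

theorem mem_of_depth_eq_zero (h : Reaches G S v) (h0 : depth G S v = 0) : v ∈ S := by
  obtain ⟨s, hs, p, hp⟩ := h.exists_walk_length_eq_depth
  rwa [p.eq_of_length_eq_zero (hp.trans h0)]

theorem depth_le_depth_add_one (h : Reaches G S v) (hadj : G.Adj u v) :
    depth G S u ≤ depth G S v + 1 := by
  obtain ⟨s, hs, p, hp⟩ := h.exists_walk_length_eq_depth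
  simpa [hp] using depth_le_length hs (p.cons hadj)

theorem exists_adj_depth_add_one (h : Reaches G S v) (h0 : depth G S v ≠ 0) :
    ∃ u, G.Adj v u ∧ depth G S u + 1 = depth G S v := by
  obtain ⟨s, hs, p, hp⟩ := h.exists_walk_length_eq_depth
  cases p with
  | nil => exact absurd hp.symm h0
  | cons hadj q =>
    refine ⟨_, hadj, le_antisymm ?_ ?_⟩
    · have := depth_le_length hs q
      rw [Walk.length_cons] at hp
      omega
    · exact Reaches.depth_le_depth_add_one ⟨s, hs, q.reachable⟩ hadj

end Reaches

open Classical in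
variable (G S) in
/-- A neighbour one step closer to `S`; `v` itself if `v ∈ S` or `v` does not reach `S`. -/
noncomputable def parent (v : V) : V :=
  if h : Reaches G S v ∧ depth G S v ≠ 0 then (h.1.exists_adj_depth_add_one h.2).choose else v

variable (G S) in
noncomputable def root (v : V) : V := (parent G S)^[depth G S v] v

variable (G S) in
def Ancestor (w x : V) : Prop := Reaches G S x ∧ ∃ n ≤ depth G S x, (parent G S)^[n] x = w

variable (G S) in
/-- The child of `w` on the forest path from `x` to its root. -/
noncomputable def towards (x w : V) : V := (parent G S)^[depth G S x - depth G S w - 1] x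

namespace Reaches

theorem adj_parent (h : Reaches G S v) (h0 : depth G S v ≠ 0) :
    G.Adj v (parent G S v) ∧ depth G S (parent G S v) + 1 = depth G S v := by
  rw [parent, dif_pos ⟨h, h0⟩]
  exact (h.exists_adj_depth_add_one h0).choose_spec

theorem reaches_parent (h : Reaches G S v) : Reaches G S (parent G S v) := by
  by_cases h0 : depth G S v = 0
  · rwa [parent, dif_neg (by simp [h0])]
  · exact h.of_adj (h.adj_parent h0).1.symm

theorem iterate_parent (h : Reaches G S v) (n : ℕ) : Reaches G S ((parent G S)^[n] v) := by
  induction n with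
  | zero => exact h
  | succ n ih => rw [Function.iterate_succ_apply']; exact ih.reaches_parent

theorem depth_iterate_parent (h : Reaches G S v) {n : ℕ} (hn : n ≤ depth G S v) :
    depth G S ((parent G S)^[n] v) + n = depth G S v := by
  induction n with
  | zero => rfl
  | succ n ih =>
    have ih := ih (by omega)
    rw [Function.iterate_succ_apply']
    have := ((h.iterate_parent n).adj_parent (by omega)).2
    omega

theorem root_mem (h : Reaches G S v) : root G S v ∈ S :=
  (h.iterate_parent _).mem_of_depth_eq_zero (by have := h.depth_iterate_parent le_rfl; omega)

end Reaches

theorem root_eq_self_of_depth_eq_zero (h0 : depth G S v = 0) : root G S v = v := by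
  rw [root, h0, Function.iterate_zero_apply]

theorem root_eq_self_of_mem (hv : v ∈ S) : root G S v = v :=
  root_eq_self_of_depth_eq_zero (depth_eq_zero_of_mem hv)

theorem ancestor_refl (h : Reaches G S x) : Ancestor G S x x := ⟨h, 0, Nat.zero_le _, rfl⟩

theorem ancestor_root (h : Reaches G S x) : Ancestor G S (root G S x) x := ⟨h, _, le_rfl, rfl⟩

namespace Ancestor

variable (h : Ancestor G S w x)
include h

theorem reaches : Reaches G S w := by
  obtain ⟨hx, n, -, rfl⟩ := h
  exact hx.iterate_parent n

theorem depth_le : depth G S w ≤ depth G S x := by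
  obtain ⟨hx, n, hn, rfl⟩ := h
  have := hx.depth_iterate_parent hn
  omega

theorem iterate_eq : (parent G S)^[depth G S x - depth G S w] x = w := by
  obtain ⟨hx, n, hn, rfl⟩ := h
  have := hx.depth_iterate_parent hn
  rw [show depth G S x - depth G S ((parent G S)^[n] x) = n by omega]

theorem root_eq : root G S w = root G S x := by
  obtain ⟨hx, n, hn, rfl⟩ := h
  rw [root, root, ← Function.iterate_add_apply, hx.depth_iterate_parent hn]

theorem eq_of_depth_eq {w' : V} (h' : Ancestor G S w' x) (hd : depth G S w = depth G S w') :
    w = w' := by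
  rw [← h.iterate_eq, ← h'.iterate_eq, hd]

theorem depth_lt_of_ne (hne : w ≠ x) : depth G S w < depth G S x :=
  lt_of_le_of_ne h.depth_le fun hd => hne (h.eq_of_depth_eq (ancestor_refl h.1) hd)

theorem ancestor_parent (h0 : depth G S w ≠ 0) : Ancestor G S (parent G S w) x := by
  obtain ⟨hx, n, hn, rfl⟩ := h
  have := hx.depth_iterate_parent hn
  exact ⟨hx, n + 1, by omega, Function.iterate_succ_apply' _ _ _⟩

theorem towards_spec (hlt : depth G S w < depth G S x) :
    Ancestor G S (towards G S x w) x ∧ depth G S (towards G S x w) = depth G S w + 1 ∧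
      parent G S (towards G S x w) = w := by
  have hd := h.1.depth_iterate_parent (n := depth G S x - depth G S w - 1) (by omega)
  refine ⟨⟨h.1, _, by omega, rfl⟩, by rw [towards]; omega, ?_⟩
  rw [towards, ← Function.iterate_succ_apply' (parent G S),
    show (depth G S x - depth G S w - 1).succ = depth G S x - depth G S w by omega, h.iterate_eq]

theorem towards_parent (h0 : depth G S w ≠ 0) : towards G S x (parent G S w) = w := by
  have hpar := (h.reaches.adj_parent h0).2
  have hpw := h.ancestor_parent h0
  obtain ⟨hanc, hd, -⟩ := hpw.towards_spec (by have := h.depth_le; omega)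
  exact hanc.eq_of_depth_eq h (by omega)

end Ancestor

/-- Take the first edge `u v` of the walk at which `P` fails for the root. -/
theorem exists_adj_root_crossing {P : V → Prop} {b : V} (p : G.Walk x b) (hb : b ∈ S)
    (hx : P (root G S x)) (hPb : ¬ P b) :
    ∃ u v, G.Adj u v ∧ Reaches G S v ∧ P (root G S u) ∧ ¬ P (root G S v) ∧
      depth G S u + 1 + depth G S v ≤ depth G S x + p.length := by
  induction p with
  | nil => exact absurd (root_eq_self_of_mem hb ▸ hx) hPb
  | @cons x y b hadj q ih =>
    have hy : Reaches G S y := ⟨b, hb, q.reachable⟩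
    rw [Walk.length_cons]
    by_cases hPy : P (root G S y)
    · obtain ⟨u, v, huv, hv, hu, hv', hlen⟩ := ih hb hPy hPb
      have := (hy.of_adj hadj).depth_le_depth_add_one hadj.symm
      exact ⟨u, v, huv, hv, hu, hv', by omega⟩
    · have := depth_le_length hb q
      exact ⟨x, y, hadj, hy, hx, hPy, by omega⟩

end SetForest

open SetForest

/-- Edges `u ℓ – v ℓ`, indexed by the leaves `ℓ = root u ℓ`, across which the root changes. -/
structure Connectors {V : Type} (G : SimpleGraph V) (S : Set V) (k : ℕ) where
  leaves : Finset V
  u : V → V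
  v : V → V
  adj : ∀ ℓ ∈ leaves, G.Adj (u ℓ) (v ℓ)
  reaches_v : ∀ ℓ ∈ leaves, Reaches G S (v ℓ)
  depth_le : ∀ ℓ ∈ leaves, depth G S (u ℓ) + 1 + depth G S (v ℓ) ≤ k
  root_u : ∀ ℓ ∈ leaves, root G S (u ℓ) = ℓ
  root_v_ne : ∀ ℓ ∈ leaves, root G S (v ℓ) ≠ ℓ

namespace Connectors

variable {V : Type} {G : SimpleGraph V} {S : Set V} {k : ℕ} (D : Connectors G S k)
  {ℓ ρ w : V}

/-- The forest paths from the `v ℓ` with `root v ℓ = ρ`, and from the corresponding `u ℓ`; a vertex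
`w` of the latter has `root w = ℓ`. -/
def treeVerts (ρ : V) : Set V :=
  {w | (∃ ℓ ∈ D.leaves, root G S (D.v ℓ) = ρ ∧ Ancestor G S w (D.v ℓ)) ∨
    (root G S w ∈ D.leaves ∧ root G S (D.v (root G S w)) = ρ ∧
      Ancestor G S w (D.u (root G S w)))}

open Classical in
/-- In the cell of `ρ` the forest parent; on the path from `u ℓ` to `ℓ`, the next vertex towards
`u ℓ`, and `v ℓ` after `u ℓ`. -/
noncomputable def treeParent (ρ w : V) : V :=
  if root G S w = ρ then parent G S w
  else if w = D.u (root G S w) then D.v (root G S w)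
  else towards G S (D.u (root G S w)) w

open Classical in
noncomputable def treeRank (ρ w : V) : ℕ :=
  if root G S w = ρ then depth G S w
  else depth G S (D.v (root G S w)) + 1 + (depth G S (D.u (root G S w)) - depth G S w)

noncomputable def tree (ρ : V) : G.Subgraph := parentTree G (D.treeVerts ρ) ρ (D.treeParent ρ)

theorem reaches_u (hℓ : ℓ ∈ D.leaves) : Reaches G S (D.u ℓ) :=
  (D.reaches_v ℓ hℓ).of_adj (D.adj ℓ hℓ)

theorem mem_of_mem_leaves (hℓ : ℓ ∈ D.leaves) : ℓ ∈ S :=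
  D.root_u ℓ hℓ ▸ (D.reaches_u hℓ).root_mem

theorem root_mem_treeVerts (hℓ : ℓ ∈ D.leaves) :
    root G S (D.v ℓ) ∈ D.treeVerts (root G S (D.v ℓ)) :=
  .inl ⟨ℓ, hℓ, rfl, ancestor_root (D.reaches_v ℓ hℓ)⟩

theorem eq_root_or_of_mem_treeVerts (hw : w ∈ D.treeVerts ρ) :
    ρ = root G S w ∨ ρ = root G S (D.v (root G S w)) := by
  rcases hw with ⟨ℓ, -, rfl, hw⟩ | ⟨-, rfl, -⟩
  · exact .inl hw.root_eq.symm
  · exact .inr rfl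

theorem treeRank_le (hw : w ∈ D.treeVerts ρ) : D.treeRank ρ w ≤ k := by
  rcases hw with ⟨ℓ, hℓ, rfl, hw⟩ | ⟨hℓ, rfl, hw⟩
  · rw [treeRank, if_pos hw.root_eq]
    have := D.depth_le ℓ hℓ
    have := hw.depth_le
    omega
  · rw [treeRank, if_neg (D.root_v_ne _ hℓ).symm]
    have := D.depth_le _ hℓ
    omega

theorem isParentMap_cell (hℓ : ℓ ∈ D.leaves) (hw : Ancestor G S w (D.v ℓ))
    (hwρ : w ≠ root G S (D.v ℓ)) :
    D.treeParent (root G S (D.v ℓ)) w ∈ D.treeVerts (root G S (D.v ℓ)) ∧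
      G.Adj w (D.treeParent (root G S (D.v ℓ)) w) ∧
      D.treeRank (root G S (D.v ℓ)) w =
        D.treeRank (root G S (D.v ℓ)) (D.treeParent (root G S (D.v ℓ)) w) + 1 := by
  have hroot := hw.root_eq
  have h0 : depth G S w ≠ 0 := fun h0 => hwρ (by rw [← hroot, root_eq_self_of_depth_eq_zero h0])
  have hpar := hw.reaches.adj_parent h0
  have hanc := hw.ancestor_parent h0
  rw [treeParent, if_pos hroot, treeRank, treeRank, if_pos hroot, if_pos hanc.root_eq]
  exact ⟨.inl ⟨ℓ, hℓ, rfl, hanc⟩, hpar.1, hpar.2.symm⟩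

theorem isParentMap_pending (hℓ : root G S w ∈ D.leaves)
    (hw : Ancestor G S w (D.u (root G S w))) :
    D.treeParent (root G S (D.v (root G S w))) w ∈ D.treeVerts (root G S (D.v (root G S w))) ∧
      G.Adj w (D.treeParent (root G S (D.v (root G S w))) w) ∧
      D.treeRank (root G S (D.v (root G S w))) w =
        D.treeRank (root G S (D.v (root G S w)))
          (D.treeParent (root G S (D.v (root G S w))) w) + 1 := by
  obtain ⟨ℓ, hℓw⟩ : ∃ ℓ, root G S w = ℓ := ⟨_, rfl⟩
  rw [hℓw] at hℓ hw ⊢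
  have hne : ℓ ≠ root G S (D.v ℓ) := (D.root_v_ne ℓ hℓ).symm
  rw [treeParent, treeRank, hℓw, if_neg hne, if_neg hne]
  by_cases hu : w = D.u ℓ
  · rw [if_pos hu, treeRank, if_pos rfl, hu, Nat.sub_self]
    exact ⟨.inl ⟨ℓ, hℓ, rfl, ancestor_refl (D.reaches_v ℓ hℓ)⟩, D.adj ℓ hℓ, rfl⟩
  · rw [if_neg hu]
    have hdu := hw.depth_lt_of_ne hu
    obtain ⟨hy, hdy, hpy⟩ := hw.towards_spec hdu
    have hry : root G S (towards G S (D.u ℓ) w) = ℓ := hy.root_eq.trans (D.root_u ℓ hℓ)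
    refine ⟨.inr ⟨by rwa [hry], by rw [hry], by rw [hry]; exact hy⟩, ?_, ?_⟩
    · have hadj := (hy.reaches.adj_parent (by omega)).1
      rw [hpy] at hadj
      exact hadj.symm
    · rw [treeRank, hry, if_neg hne]
      omega

theorem isParentMap (ρ : V) :
    IsParentMap G (D.treeVerts ρ) ρ (D.treeParent ρ) (D.treeRank ρ) := by
  rintro w (⟨ℓ, hℓ, rfl, hw⟩ | ⟨hℓ, rfl, hw⟩) hwρ
  · exact D.isParentMap_cell hℓ hw hwρ
  · exact D.isParentMap_pending hℓ hw

theorem u_mem_treeVerts (hℓ : ℓ ∈ D.leaves) : D.u ℓ ∈ D.treeVerts (root G S (D.v ℓ)) := by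
  have hanc := ancestor_refl (D.reaches_u hℓ)
  refine .inr ⟨?_, ?_, ?_⟩ <;> rw [D.root_u ℓ hℓ] <;> assumption

theorem mem_treeVerts_of_mem_leaves (hℓ : ℓ ∈ D.leaves) : ℓ ∈ D.treeVerts (root G S (D.v ℓ)) := by
  have hanc := ancestor_root (D.reaches_u hℓ)
  rw [D.root_u ℓ hℓ] at hanc
  refine .inr ⟨?_, ?_, ?_⟩ <;> rw [root_eq_self_of_mem (D.mem_of_mem_leaves hℓ)] <;> assumption

theorem treeParent_ne_of_mem_leaves (hℓ : ℓ ∈ D.leaves) {y : V}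
    (hy : y ∈ D.treeVerts (root G S (D.v ℓ))) (hyρ : y ≠ root G S (D.v ℓ)) :
    D.treeParent (root G S (D.v ℓ)) y ≠ ℓ := by
  have hℓS := D.mem_of_mem_leaves hℓ
  rcases hy with ⟨ℓ', hℓ', hρ', hy⟩ | ⟨hℓ', hρ', hy⟩
  · have hroot := hy.root_eq.trans hρ'
    have h0 : depth G S y ≠ 0 := fun h0 =>
      hyρ (by rw [← hroot, root_eq_self_of_depth_eq_zero h0])
    rw [treeParent, if_pos hroot]
    intro hpar
    have hrpar := (hy.ancestor_parent h0).root_eq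
    rw [hpar, root_eq_self_of_mem hℓS, hρ'] at hrpar
    exact D.root_v_ne ℓ hℓ hrpar.symm
  · have hne : root G S y ≠ root G S (D.v ℓ) := hρ' ▸ (D.root_v_ne _ hℓ').symm
    rw [treeParent, if_neg hne]
    split_ifs with hu
    · intro hv
      apply D.root_v_ne ℓ hℓ
      rw [← hρ', hv, root_eq_self_of_mem hℓS]
    · intro h
      have hd := (hy.towards_spec (hy.depth_lt_of_ne hu)).2.1
      rw [h, depth_eq_zero_of_mem hℓS] at hd
      omega

theorem mem_leaves_of_forall_treeParent_ne (hw : w ∈ D.treeVerts ρ) (hwρ : w ≠ ρ)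
    (hchild : ∀ y ∈ D.treeVerts ρ, y ≠ ρ → D.treeParent ρ y ≠ w) :
    w ∈ D.leaves ∧ root G S (D.v w) = ρ := by
  rcases hw with ⟨ℓ, hℓ, rfl, hw⟩ | ⟨hℓ, rfl, hw⟩
  · exfalso
    have hρS := (D.reaches_v ℓ hℓ).root_mem
    by_cases hwv : w = D.v ℓ
    · refine hchild (D.u ℓ) (D.u_mem_treeVerts hℓ) (fun h => D.root_v_ne ℓ hℓ ?_) ?_
      · rw [← root_eq_self_of_mem hρS, ← h, D.root_u ℓ hℓ]
      · rw [treeParent, D.root_u ℓ hℓ, if_neg (D.root_v_ne ℓ hℓ).symm, if_pos rfl, hwv]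
    · obtain ⟨hy, hdy, hpy⟩ := hw.towards_spec (hw.depth_lt_of_ne hwv)
      refine hchild _ (.inl ⟨ℓ, hℓ, rfl, hy⟩) (fun h => ?_) ?_
      · rw [h, depth_eq_zero_of_mem hρS] at hdy
        omega
      · rw [treeParent, if_pos hy.root_eq, hpy]
  · by_cases h0 : depth G S w = 0
    · rw [root_eq_self_of_depth_eq_zero h0] at hℓ ⊢
      exact ⟨hℓ, rfl⟩
    exfalso
    have hy := hw.ancestor_parent h0
    have hry : root G S (parent G S w) = root G S w := hy.root_eq.trans (D.root_u _ hℓ)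
    have hne : root G S w ≠ root G S (D.v (root G S w)) := (D.root_v_ne _ hℓ).symm
    have hdepth := (hw.reaches.adj_parent h0).2
    refine hchild (parent G S w) (.inr ⟨by rwa [hry], by rw [hry], by rw [hry]; exact hy⟩)
      (fun h => hne ?_) ?_
    · have hr := congrArg (root G S) h
      rwa [hry, root_eq_self_of_mem (D.reaches_v _ hℓ).root_mem] at hr
    · have hu : parent G S w ≠ D.u (root G S w) := fun h => by
        have := hw.depth_le
        rw [← h] at this
        omega
      rw [treeParent, hry, if_neg hne, if_neg hu, hw.towards_parent h0]

theorem isLeaf_tree_iff : IsLeaf (D.tree ρ) ρ w ↔ w ∈ D.leaves ∧ root G S (D.v w) = ρ := by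
  rw [tree, (D.isParentMap ρ).isLeaf_iff]
  constructor
  · rintro ⟨hw, hwρ, hchild⟩
    exact D.mem_leaves_of_forall_treeParent_ne hw hwρ hchild
  · rintro ⟨hw, rfl⟩
    exact ⟨D.mem_treeVerts_of_mem_leaves hw, (D.root_v_ne w hw).symm,
      fun y hy hyρ => D.treeParent_ne_of_mem_leaves hw hy hyρ⟩

end Connectors

namespace Connectors

variable {V : Type} {G : SimpleGraph V} {S : Set V} {k : ℕ} (D : Connectors G S k)

theorem exists_treeFamily :
    ∃ (m : ℕ) (T : Fin m → G.Subgraph) (r : Fin m → V),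
      (∀ t, r t ∈ (T t).verts) ∧ (∀ t, (T t).coe.IsTree) ∧ (∀ t, r t ∈ S) ∧
      (∀ t w, IsLeaf (T t) (r t) w ↔ w ∈ D.leaves ∧ root G S (D.v w) = r t) ∧
      (∀ ℓ ∈ D.leaves, ∃ t, r t = root G S (D.v ℓ)) ∧
      (∀ t, ∀ w ∈ (T t).verts, WithinTreeDist (T t) w (r t) k) ∧
      (∀ e, {t | e ∈ (T t).edgeSet}.ncard ≤ 2) := by
  classical
  let R := D.leaves.image fun ℓ => root G S (D.v ℓ)
  let r (t : Fin R.card) : V := R.equivFin.symm t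
  have hr (t) : ∃ ℓ ∈ D.leaves, root G S (D.v ℓ) = r t :=
    Finset.mem_image.mp (R.equivFin.symm t).2
  have hroot (t) : r t ∈ D.treeVerts (r t) := by
    obtain ⟨ℓ, hℓ, hρ⟩ := hr t
    exact hρ ▸ D.root_mem_treeVerts hℓ
  refine ⟨R.card, fun t => D.tree (r t), r, hroot, fun t => (D.isParentMap _).isTree (hroot t),
    fun t => ?_, fun t w => D.isLeaf_tree_iff, fun ℓ hℓ => ?_, fun t w hw => ?_, fun e => ?_⟩
  · obtain ⟨ℓ, hℓ, hρ⟩ := hr t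
    exact hρ ▸ (D.reaches_v ℓ hℓ).root_mem
  · exact ⟨R.equivFin ⟨_, Finset.mem_image_of_mem _ hℓ⟩, by simp [r]⟩
  · obtain ⟨p, hp⟩ := (D.isParentMap (r t)).exists_walk_to_root (hroot t) hw
    exact ⟨hw, hroot t, p, hp.trans (D.treeRank_le hw)⟩
  · induction e using Sym2.ind with
    | h a b =>
      calc {t | s(a, b) ∈ (D.tree (r t)).edgeSet}.ncard
          ≤ ({root G S a, root G S (D.v (root G S a))} : Set V).ncard :=
            Set.ncard_le_ncard_of_injOn r
              (fun t ht => D.eq_root_or_of_mem_treeVerts ((D.tree (r t)).edge_vert ht))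
              (fun t _ t' _ h => R.equivFin.symm.injective (Subtype.ext h))
        _ ≤ 2 := (Set.ncard_insert_le _ _).trans (by rw [Set.ncard_singleton])

end Connectors

section Clusters

variable {V : Type} {G : SimpleGraph V} {k p : ℕ} {C : Fin p → Set V}

theorem index_eq_of_mem_of_mem (hdisj : ∀ i j, i ≠ j → Disjoint (C i) (C j)) {x : V} {i j : Fin p}
    (hi : x ∈ C i) (hj : x ∈ C j) : i = j :=
  by_contra fun h => Set.disjoint_left.mp (hdisj i j h) hi hj

theorem exists_connector_of_not_distIsolated (hdisj : ∀ i j, i ≠ j → Disjoint (C i) (C j))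
    {i : Fin p} (hi : ¬ DistIsolated G k C i) :
    ∃ u v, G.Adj u v ∧ Reaches G (⋃ j, C j) v ∧
      depth G (⋃ j, C j) u + 1 + depth G (⋃ j, C j) v ≤ k ∧
      root G (⋃ j, C j) u ∈ C i ∧ root G (⋃ j, C j) v ∉ C i := by
  simp only [DistIsolated, FarApart, not_forall, not_lt] at hi
  obtain ⟨j, hji, a, ha, b, hb, q, hq⟩ := hi
  have hS {x : V} {j : Fin p} (hx : x ∈ C j) : x ∈ ⋃ j, C j := Set.mem_iUnion.mpr ⟨j, hx⟩
  obtain ⟨u, v, huv, hv, hu, hv', hlen⟩ := exists_adj_root_crossing (P := (· ∈ C i)) q (hS hb)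
    (by rwa [root_eq_self_of_mem (hS ha)]) (fun hbi => hji (index_eq_of_mem_of_mem hdisj hb hbi))
  rw [depth_eq_zero_of_mem (hS ha)] at hlen
  exact ⟨u, v, huv, hv, by omega, hu, hv'⟩

theorem exists_clusterConnectors (hdisj : ∀ i j, i ≠ j → Disjoint (C i) (C j)) :
    ∃ D : Connectors G (⋃ i, C i) k,
      (∀ i, ¬ DistIsolated G k C i → ∃ ℓ ∈ D.leaves, ℓ ∈ C i ∧ root G (⋃ i, C i) (D.v ℓ) ∉ C i) ∧
      ∀ i, ∀ ℓ ∈ D.leaves, ∀ ℓ' ∈ D.leaves, ℓ ∈ C i → ℓ' ∈ C i → ℓ = ℓ' := by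
  classical
  set S := ⋃ i, C i
  choose a b hab using fun i : {i // ¬ DistIsolated G k C i} =>
    exists_connector_of_not_distIsolated hdisj i.2
  let L := Finset.univ.image fun i => root G S (a i)
  have hL {ℓ : V} (hℓ : ℓ ∈ L) : ∃ i, root G S (a i) = ℓ := by simpa [L] using hℓ
  have hmemL (i) : root G S (a i) ∈ L := Finset.mem_image_of_mem _ (Finset.mem_univ i)
  have hconn (ℓ : V) : ∃ x y, ℓ ∈ L → G.Adj x y ∧ Reaches G S y ∧
      depth G S x + 1 + depth G S y ≤ k ∧ root G S x = ℓ ∧ ∀ i, ℓ ∈ C i → root G S y ∉ C i := by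
    by_cases hℓ : ℓ ∈ L
    · obtain ⟨i, rfl⟩ := hL hℓ
      obtain ⟨hadj, hb, hlen, ha, hb'⟩ := hab i
      exact ⟨a i, b i, fun _ => ⟨hadj, hb, hlen, rfl,
        fun j hj => index_eq_of_mem_of_mem hdisj ha hj ▸ hb'⟩⟩
    · exact ⟨ℓ, ℓ, fun h => absurd h hℓ⟩
  choose u v huv using hconn
  refine ⟨⟨L, u, v, fun ℓ hℓ => (huv ℓ hℓ).1, fun ℓ hℓ => (huv ℓ hℓ).2.1,
    fun ℓ hℓ => (huv ℓ hℓ).2.2.1, fun ℓ hℓ => (huv ℓ hℓ).2.2.2.1, fun ℓ hℓ h => ?_⟩,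
    fun i hi => ?_, ?_⟩
  · obtain ⟨i, rfl⟩ := hL hℓ
    exact (huv _ hℓ).2.2.2.2 i.1 (hab i).2.2.2.1 (by rw [h]; exact (hab i).2.2.2.1)
  · have ha := (hab ⟨i, hi⟩).2.2.2.1
    exact ⟨_, hmemL _, ha, (huv _ (hmemL _)).2.2.2.2 i ha⟩
  · rintro i ℓ hℓ ℓ' hℓ' hi hi'
    obtain ⟨j, rfl⟩ := hL hℓ
    obtain ⟨j', rfl⟩ := hL hℓ'
    have hj := index_eq_of_mem_of_mem hdisj (hab j).2.2.2.1 hi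
    have hj' := index_eq_of_mem_of_mem hdisj (hab j').2.2.2.1 hi'
    rw [Subtype.ext (hj.trans hj'.symm)]

end Clusters

theorem statement5_general {V : Type} (G : SimpleGraph V) (k : ℕ)
    (p : ℕ) (C : Fin p → Set V)
    (hdisj : ∀ i j, i ≠ j → Disjoint (C i) (C j)) :
    ∃ (m : ℕ) (T : Fin m → G.Subgraph) (root : Fin m → V),
      (∀ t, root t ∈ (T t).verts) ∧
      (∀ t, (T t).coe.IsTree) ∧
      -- (1) the root and every leaf of each tree is a vertex of some cluster
      (∀ t, ∃ i, root t ∈ C i) ∧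
      (∀ t v, IsLeaf (T t) (root t) v → ∃ i, v ∈ C i) ∧
      -- (2) every vertex of each tree is within distance `k` of the root inside the tree
      (∀ t, ∀ v ∈ (T t).verts, WithinTreeDist (T t) v (root t) k) ∧
      -- (3) every non distance-`k` isolated cluster contains exactly one vertex that is
      -- a leaf of a tree whose root lies in a different cluster
      (∀ i, ¬ DistIsolated G k C i →
        ∃! w : V, w ∈ C i ∧
          ∃ t, IsLeaf (T t) (root t) w ∧ ∃ j, j ≠ i ∧ root t ∈ C j) ∧
      -- (4) every edge of `G` belongs to at most `4` of the trees
      (∀ e ∈ G.edgeSet, {t : Fin m | e ∈ (T t).edgeSet}.ncard ≤ 4) := by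
  obtain ⟨D, hcover, hunique⟩ := exists_clusterConnectors (G := G) (k := k) hdisj
  obtain ⟨m, T, r, hr, htree, hrS, hleaf, hleafRoot, hdepth, hedge⟩ := D.exists_treeFamily
  refine ⟨m, T, r, hr, htree, fun t => Set.mem_iUnion.mp (hrS t),
    fun t w hw => Set.mem_iUnion.mp (D.mem_of_mem_leaves ((hleaf t w).mp hw).1), hdepth,
    fun i hi => ?_, fun e _ => (hedge e).trans (by norm_num)⟩
  obtain ⟨ℓ, hℓ, hℓC, hvC⟩ := hcover i hi
  obtain ⟨t, ht⟩ := hleafRoot ℓ hℓ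
  obtain ⟨j, hj⟩ := Set.mem_iUnion.mp (hrS t)
  refine ⟨ℓ, ⟨hℓC, t, (hleaf t ℓ).mpr ⟨hℓ, ht.symm⟩, j, fun hji => hvC ?_, hj⟩, ?_⟩
  · rwa [← ht, ← hji]
  · rintro w ⟨hwC, t', hw, -⟩
    exact hunique i w ((hleaf t' w).mp hw).1 ℓ hℓ hwC hℓC

theorem statement5 {V : Type} [Fintype V] (G : SimpleGraph V) (k : ℕ) (hk : 1 ≤ k)
    (p : ℕ) (C : Fin p → Set V)
    (hdisj : ∀ i j, i ≠ j → Disjoint (C i) (C j))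
    (hne : ∀ i, (C i).Nonempty) :
    ∃ (m : ℕ) (T : Fin m → G.Subgraph) (root : Fin m → V),
      (∀ t, root t ∈ (T t).verts) ∧
      (∀ t, (T t).coe.IsTree) ∧
      -- (1) the root and every leaf of each tree is a vertex of some cluster
      (∀ t, ∃ i, root t ∈ C i) ∧
      (∀ t v, IsLeaf (T t) (root t) v → ∃ i, v ∈ C i) ∧
      -- (2) every vertex of each tree is within distance `k` of the root inside the tree
      (∀ t, ∀ v ∈ (T t).verts, WithinTreeDist (T t) v (root t) k) ∧
      -- (3) every non distance-`k` isolated cluster contains exactly one vertex that is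
      -- a leaf of a tree whose root lies in a different cluster
      (∀ i, ¬ DistIsolated G k C i →
        ∃! w : V, w ∈ C i ∧
          ∃ t, IsLeaf (T t) (root t) w ∧ ∃ j, j ≠ i ∧ root t ∈ C j) ∧
      -- (4) every edge of `G` belongs to at most `4` of the trees
      (∀ e ∈ G.edgeSet, {t : Fin m | e ∈ (T t).edgeSet}.ncard ≤ 4) :=
  statement5_general G k p C hdisj
end
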